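/- arXiv:2105.12954 — 9 statements merged into one kernel-verified Lean document; each statement's English description precedes it below -/
import Mathlib

section
/- Theorem (dilatability). For every point x in the sequence-form polytope Q, the dilatable global entropy and the dilated entropy coincide: φ̃(x) = φ(x). -/
open Finset

/-- **Dilatability** (Theorem 1). For every point `x` in the sequence-form polytope `Q`,
the dilatable global entropy `φ̃` and the dilated entropy `φ` coincide. -/
theorem dilatable_global_entropy_eq_dilated_entropy
    {J : Type} [Fintype J] [DecidableEq J]
    {A : J → Type} [∀ j, Fintype (A j)] [∀ j, DecidableEq (A j)] [∀ j, Nonempty (A j)]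
    (p : J → Option ((j : J) × A j))
    (hwf : WellFounded (fun j' j : J => ∃ a : A j, p j' = some ⟨j, a⟩))
    (γ : J → ℝ) (γ0 : ℝ)
    (hγ : ∀ j : J, γ j = 1 + (Finset.univ : Finset (A j)).sup' Finset.univ_nonempty
        (fun a => ∑ j' ∈ Finset.univ.filter (fun j' => p j' = some ⟨j, a⟩), γ j'))
    (hγ0 : γ0 = 1 + ∑ j ∈ Finset.univ.filter (fun j : J => p j = none), γ j)
    (w : Option ((j : J) × A j) → ℝ)
    (hw0 : w none = γ0 - ∑ j ∈ Finset.univ.filter (fun j : J => p j = none), γ j)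
    (hw : ∀ (j : J) (a : A j),
      w (some ⟨j, a⟩) = γ j - ∑ j' ∈ Finset.univ.filter (fun j' => p j' = some ⟨j, a⟩), γ j')
    (x : Option ((j : J) × A j) → ℝ)
    (hx0 : ∀ σ, 0 ≤ x σ) (hx1 : x none = 1)
    (hxf : ∀ j : J, ∑ a : A j, x (some ⟨j, a⟩) = x (p j)) :
    w none * (x none * Real.log (x none))
      + (∑ j : J, ∑ a : A j, w (some ⟨j, a⟩) * (x (some ⟨j, a⟩) * Real.log (x (some ⟨j, a⟩))))
      + (∑ j : J, γ j * (x (p j) * Real.log ((Fintype.card (A j) : ℝ))))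
    = γ0 * (x none * Real.log (x none))
      + ∑ j : J, γ j * (x (p j) * Real.log ((Fintype.card (A j) : ℝ))
          + ∑ a : A j, x (some ⟨j, a⟩) * Real.log (x (some ⟨j, a⟩) / x (p j))) := by
  set f : Option ((j : J) × A j) → ℝ := fun σ => x σ * Real.log (x σ) with hf
  -- Step 1: split the logarithm of a ratio
  have hsplit : ∀ j : J, ∑ a : A j, x (some ⟨j, a⟩) * Real.log (x (some ⟨j, a⟩) / x (p j))
      = (∑ a : A j, f (some ⟨j, a⟩)) - f (p j) := by
    intro j
    have h1 : ∀ a : A j, x (some ⟨j, a⟩) * Real.log (x (some ⟨j, a⟩) / x (p j))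
        = f (some ⟨j, a⟩) - x (some ⟨j, a⟩) * Real.log (x (p j)) := by
      intro a
      rcases eq_or_lt_of_le (hx0 (some ⟨j, a⟩)) with h | h
      · simp [hf, ← h]
      · have hp : 0 < x (p j) := by
          refine lt_of_lt_of_le h ?_
          rw [← hxf j]
          exact Finset.single_le_sum (f := fun a : A j => x (some ⟨j, a⟩)) (fun a _ => hx0 _) (Finset.mem_univ a)
        rw [Real.log_div (ne_of_gt h) (ne_of_gt hp)]
        simp [hf]; ring
    rw [Finset.sum_congr rfl (fun a _ => h1 a), Finset.sum_sub_distrib, ← Finset.sum_mul,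
      hxf j]
  -- Step 2: fiber decomposition of ∑ j, γ j * f (p j)
  have hfib : ∑ j : J, γ j * f (p j)
      = (∑ j ∈ Finset.univ.filter (fun j : J => p j = none), γ j) * f none
        + ∑ j : J, ∑ a : A j,
            (∑ j' ∈ Finset.univ.filter (fun j' => p j' = some ⟨j, a⟩), γ j') * f (some ⟨j, a⟩) := by
    have h := Finset.sum_fiberwise (Finset.univ : Finset J) p (fun j => γ j * f (p j))
    have h2 : ∀ σ : Option ((j : J) × A j),
        ∑ j ∈ Finset.univ.filter (fun j => p j = σ), γ j * f (p j)
        = (∑ j ∈ Finset.univ.filter (fun j => p j = σ), γ j) * f σ := by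
      intro σ
      rw [Finset.sum_mul]
      refine Finset.sum_congr rfl (fun j hj => ?_)
      rw [(Finset.mem_filter.mp hj).2]
    calc ∑ j : J, γ j * f (p j)
        = ∑ σ : Option ((j : J) × A j), ∑ j ∈ Finset.univ.filter (fun j => p j = σ),
            γ j * f (p j) := h.symm
      _ = ∑ σ : Option ((j : J) × A j),
            (∑ j ∈ Finset.univ.filter (fun j => p j = σ), γ j) * f σ := by
          exact Finset.sum_congr rfl (fun σ _ => h2 σ)
      _ = _ := by
          rw [Fintype.sum_option]
          congr 1
          rw [← Finset.univ_sigma_univ, Finset.sum_sigma]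
  -- Step 3: put everything together
  have hR : ∑ j : J, γ j * (x (p j) * Real.log ((Fintype.card (A j) : ℝ))
        + ∑ a : A j, x (some ⟨j, a⟩) * Real.log (x (some ⟨j, a⟩) / x (p j)))
      = (∑ j : J, γ j * (x (p j) * Real.log ((Fintype.card (A j) : ℝ))))
        + (∑ j : J, γ j * ∑ a : A j, f (some ⟨j, a⟩))
        - ∑ j : J, γ j * f (p j) := by
    rw [Finset.sum_congr rfl (fun j _ => by rw [hsplit j])]
    rw [← Finset.sum_add_distrib, ← Finset.sum_sub_distrib]
    exact Finset.sum_congr rfl (fun j _ => by ring)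
  have hL : ∑ j : J, ∑ a : A j, w (some ⟨j, a⟩) * f (some ⟨j, a⟩)
      = (∑ j : J, γ j * ∑ a : A j, f (some ⟨j, a⟩))
        - ∑ j : J, ∑ a : A j,
            (∑ j' ∈ Finset.univ.filter (fun j' => p j' = some ⟨j, a⟩), γ j') * f (some ⟨j, a⟩) := by
    rw [← Finset.sum_sub_distrib]
    refine Finset.sum_congr rfl (fun j _ => ?_)
    rw [Finset.mul_sum, ← Finset.sum_sub_distrib]
    refine Finset.sum_congr rfl (fun a _ => ?_)
    rw [hw j a]; ring
  show w none * f none + (∑ j : J, ∑ a : A j, w (some ⟨j, a⟩) * f (some ⟨j, a⟩)) + _ = _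
  rw [hL, hR, hw0]
  rw [hfib]
  ring
end

section
/- Theorem (ℓ₂ strong convexity of the dilatable global entropy). For every x ∈ Q with x_σ > 0 for all σ ∈ Σ, and for every vector m ∈ ℝ^Σ, the Hessian of the dilatable global entropy φ̃ at x satisfies m^⊤ ∇²φ̃(x) m = Σ_{σ∈Σ} w_σ m_σ² / x_σ ≥ ‖m‖₂². In particular, φ̃ is 1-strongly convex with respect to the Euclidean norm on the strictly positive part of Q. -/
/-!
The Hessian of `φ̃` is diagonal: the `x log x` terms contribute `w σ / x σ` and the
`x_{p_j} log |A_j|` terms are linear. Every weight satisfies `w σ ≥ 1`, because `γ_j` exceeds by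
one the largest total weight of the children below any action at `j`. Every point of the
sequence-form polytope satisfies `x σ ≤ 1`, because mass only splits on the way down from the
root. Hence `w σ / x σ ≥ 1` for every `σ`.
-/

open Finset Function Relation

theorem WellFounded.swap_of_finite {α : Type*} [Finite α] {r : α → α → Prop}
    (hr : WellFounded r) : WellFounded (swap r) := by
  have : Std.Irrefl (TransGen (swap r)) :=
    ⟨fun a h => hr.transGen.irrefl.irrefl a (transGen_swap.mp h)⟩
  exact Subrelation.wf TransGen.single (Finite.wellFounded_of_trans_of_irrefl _)

section Entropy

open ContinuousLinearMap

variable {ι : Type*} [Fintype ι]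

theorem hasFDerivAt_sum_mul_mul_log (c : ι → ℝ) {y : ι → ℝ} (hy : ∀ i, y i ≠ 0) :
    HasFDerivAt (fun z : ι → ℝ => ∑ i, c i * (z i * Real.log (z i)))
      (∑ i, (c i * (Real.log (y i) + 1)) • (proj i : (ι → ℝ) →L[ℝ] ℝ)) y := by
  refine HasFDerivAt.fun_sum fun i _ => ?_
  have h := ((Real.hasDerivAt_mul_log (hy i)).comp_hasFDerivAt y
    (proj i : (ι → ℝ) →L[ℝ] ℝ).hasFDerivAt).const_mul (c i)
  rwa [smul_smul] at h

theorem hasFDerivAt_sum_mul_log_add_one_smul_proj (c : ι → ℝ) {x : ι → ℝ}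
    (hx : ∀ i, x i ≠ 0) :
    HasFDerivAt
      (fun y : ι → ℝ =>
        ∑ i, (c i * (Real.log (y i) + 1)) • (proj i : (ι → ℝ) →L[ℝ] ℝ))
      (∑ i, ((c i / x i) • (proj i : (ι → ℝ) →L[ℝ] ℝ)).smulRight
        (proj i : (ι → ℝ) →L[ℝ] ℝ)) x := by
  refine HasFDerivAt.fun_sum fun i _ => ?_
  have h := (((Real.hasDerivAt_log (hx i)).comp_hasFDerivAt x
    (proj i : (ι → ℝ) →L[ℝ] ℝ).hasFDerivAt).add_const 1).const_mul (c i)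
  rw [smul_smul, ← div_eq_mul_inv] at h
  exact h.smul_const (proj i : (ι → ℝ) →L[ℝ] ℝ)

theorem iteratedFDeriv_two_sum_mul_mul_log_add_clm (c : ι → ℝ) (L : (ι → ℝ) →L[ℝ] ℝ)
    {x : ι → ℝ} (hx : ∀ i, 0 < x i) (m : ι → ℝ) :
    iteratedFDeriv ℝ 2 (fun y : ι → ℝ => (∑ i, c i * (y i * Real.log (y i))) + L y) x
      ![m, m] = ∑ i, c i * m i ^ 2 / x i := by
  have hpos : ∀ᶠ y in nhds x, ∀ i, 0 < y i :=
    Filter.eventually_all.2 fun i =>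
      (continuous_apply i).continuousAt.eventually (lt_mem_nhds (hx i))
  have hgrad : fderiv ℝ (fun y : ι → ℝ => (∑ i, c i * (y i * Real.log (y i))) + L y)
      =ᶠ[nhds x] fun y =>
        (∑ i, (c i * (Real.log (y i) + 1)) • (proj i : (ι → ℝ) →L[ℝ] ℝ)) + L := by
    filter_upwards [hpos] with y hy
    exact ((hasFDerivAt_sum_mul_mul_log c fun i => (hy i).ne').add L.hasFDerivAt).fderiv
  rw [iteratedFDeriv_two_apply, hgrad.fderiv_eq,
    ((hasFDerivAt_sum_mul_log_add_one_smul_proj c fun i => (hx i).ne').add_const L).fderiv]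
  simp only [_root_.sum_apply, smulRight_apply, _root_.smul_apply, proj_apply, smul_eq_mul,
    Matrix.cons_val_zero, Matrix.cons_val_one]
  exact sum_congr rfl fun i _ => by ring

theorem sum_sq_le_sum_mul_sq_div {w x : ι → ℝ} (hw : ∀ i, 1 ≤ w i) (hx : ∀ i, 0 < x i)
    (hx1 : ∀ i, x i ≤ 1) (m : ι → ℝ) : ∑ i, m i ^ 2 ≤ ∑ i, w i * m i ^ 2 / x i := by
  refine sum_le_sum fun i _ => ?_
  rw [le_div_iff₀ (hx i)]
  nlinarith [sq_nonneg (m i), hw i, hx1 i]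

end Entropy

section SequenceForm

variable {J : Type*} {A : J → Type*} [∀ j, Fintype (A j)] {p : J → Option ((j : J) × A j)}

theorem sequenceForm_le_one [Finite J]
    (hwf : WellFounded (fun j' j : J => ∃ a : A j, p j' = some ⟨j, a⟩))
    {x : Option ((j : J) × A j) → ℝ} (hx0 : ∀ σ, 0 ≤ x σ) (hx1 : x none = 1)
    (hxf : ∀ j : J, ∑ a : A j, x (some ⟨j, a⟩) = x (p j)) (σ : Option ((j : J) × A j)) :
    x σ ≤ 1 := by
  have hchild : ∀ j a, x (some ⟨j, a⟩) ≤ x (p j) := fun j a =>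
    hxf j ▸ single_le_sum (f := fun a => x (some ⟨j, a⟩)) (fun _ _ => hx0 _) (mem_univ a)
  have hparent : ∀ j, x (p j) ≤ 1 := by
    intro j
    induction j using hwf.swap_of_finite.induction with
    | _ j ih =>
      rcases h : p j with _ | ⟨k, a⟩
      · exact hx1.le
      · exact (hchild k a).trans (ih k ⟨a, h⟩)
  rcases σ with _ | ⟨j, a⟩
  · exact hx1.le
  · exact (hchild j a).trans (hparent j)

end SequenceForm

/-- **ℓ₂ strong convexity of the dilatable global entropy.** For every `x ∈ Q` with all
coordinates strictly positive and every `m`, the Hessian quadratic form of `φ̃` at `x` equals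
`∑ σ, w σ * m σ ^ 2 / x σ`, which is at least `‖m‖₂² = ∑ σ, m σ ^ 2`. -/
theorem dge_l2_strong_convexity
    {J : Type} [Fintype J] [DecidableEq J]
    {A : J → Type} [∀ j, Fintype (A j)] [∀ j, DecidableEq (A j)] [∀ j, Nonempty (A j)]
    (p : J → Option ((j : J) × A j))
    (hwf : WellFounded (fun j' j : J => ∃ a : A j, p j' = some ⟨j, a⟩))
    (γ : J → ℝ) (γ0 : ℝ)
    (hγ : ∀ j : J, γ j = 1 + (Finset.univ : Finset (A j)).sup' Finset.univ_nonempty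
        (fun a => ∑ j' ∈ Finset.univ.filter (fun j' => p j' = some ⟨j, a⟩), γ j'))
    (hγ0 : γ0 = 1 + ∑ j ∈ Finset.univ.filter (fun j : J => p j = none), γ j)
    (w : Option ((j : J) × A j) → ℝ)
    (hw0 : w none = γ0 - ∑ j ∈ Finset.univ.filter (fun j : J => p j = none), γ j)
    (hw : ∀ (j : J) (a : A j),
      w (some ⟨j, a⟩) = γ j - ∑ j' ∈ Finset.univ.filter (fun j' => p j' = some ⟨j, a⟩), γ j')
    (φ : (Option ((j : J) × A j) → ℝ) → ℝ)
    (hφ : φ = fun x => w none * (x none * Real.log (x none))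
      + (∑ j : J, ∑ a : A j, w (some ⟨j, a⟩) * (x (some ⟨j, a⟩) * Real.log (x (some ⟨j, a⟩))))
      + (∑ j : J, γ j * (x (p j) * Real.log ((Fintype.card (A j) : ℝ)))))
    (x : Option ((j : J) × A j) → ℝ)
    (hxpos : ∀ σ, 0 < x σ) (hx1 : x none = 1)
    (hxf : ∀ j : J, ∑ a : A j, x (some ⟨j, a⟩) = x (p j))
    (m : Option ((j : J) × A j) → ℝ) :
    iteratedFDeriv ℝ 2 φ x ![m, m] = ∑ σ, w σ * (m σ) ^ 2 / x σ ∧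
    ∑ σ, w σ * (m σ) ^ 2 / x σ ≥ ∑ σ, (m σ) ^ 2 := by
  set L : (Option ((j : J) × A j) → ℝ) →L[ℝ] ℝ :=
    ∑ j, (γ j * Real.log (Fintype.card (A j))) • ContinuousLinearMap.proj (p j)
  have hφL : φ = fun y => (∑ σ, w σ * (y σ * Real.log (y σ))) + L y := by
    funext y
    simp only [hφ, L, Fintype.sum_option, ← univ_sigma_univ, sum_sigma, _root_.sum_apply,
      _root_.smul_apply, ContinuousLinearMap.proj_apply, smul_eq_mul]
    exact congrArg _ (sum_congr rfl fun j _ => by ring)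
  have hw1 : ∀ σ, 1 ≤ w σ := by
    rintro (_ | ⟨j, a⟩)
    · rw [hw0, hγ0, add_sub_cancel_right]
    · rw [hw j a, hγ j]
      linarith [le_sup' (fun a => ∑ j' ∈ univ.filter (fun j' => p j' = some ⟨j, a⟩), γ j')
        (mem_univ a)]
  exact ⟨hφL ▸ iteratedFDeriv_two_sum_mul_mul_log_add_clm w L hxpos m,
    sum_sq_le_sum_mul_sq_div hw1 hxpos
      (sequenceForm_le_one hwf (fun σ => (hxpos σ).le) hx1 hxf) m⟩
end

section
/- Theorem (diameter bound). Assume J is nonempty. For every x in the sequence-form polytope Q, the dilatable global entropy satisfies 0 ≤ φ̃(x) ≤ M_Q² · max_{j∈J} log|A_j|, where M_Q := max_{x∈Q} ‖x‖₁. Consequently, the φ̃-range max_{x∈Q} φ̃(x) − min_{x∈Q} φ̃(x) of Q is at most M_Q² · max_{j∈J} log|A_j|. -/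
/-!
Splitting the `w`-weighted terms of `φ̃` along the tree rewrites `φ̃ x` as
`∑ j, γ j * x (p j) * ψ_j (x_j / x (p j))`, where `ψ_j b = log |A j| + ∑ a, b a * log (b a)` is
the normalised negative entropy on the simplex at `j`, which lies in `[0, log |A j|]`. Hence
`0 ≤ φ̃ x ≤ (max_j log |A j|) * ∑ j, γ j * x (p j)`.

Since `γ j ≥ 1 + ∑ γ` over the children of any `(j, a)`, and a sum of squares of nonnegative reals
is at most the square of their sum, regrouping `∑ j, γ j ^ 2 * x (p j)` by parent sequences shows
that `∑ j, (γ j ^ 2 - (γ j - 1) ^ 2) * x (p j)` is at most `(∑ γ over the roots) ^ 2`; this bounds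
`∑ j, γ j * x (p j)`. Finally the pure strategy that always plays an action maximising the
children's weight has `ℓ¹`-norm at least `1 + ∑ γ over the roots`, so that square is at most
`M_Q ^ 2`.
-/

open Finset Real

theorem Real.sum_mul_log_le_sum_mul_log_sum {ι : Type*} (s : Finset ι) {f : ι → ℝ}
    (hf : ∀ i ∈ s, 0 ≤ f i) :
    ∑ i ∈ s, f i * log (f i) ≤ (∑ i ∈ s, f i) * log (∑ i ∈ s, f i) := by
  rw [sum_mul]
  refine sum_le_sum fun i hi => ?_
  rcases (hf i hi).eq_or_lt with h | h
  · simp [← h]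
  · exact mul_le_mul_of_nonneg_left (log_le_log h (single_le_sum hf hi)) (hf i hi)

theorem Real.mul_log_sum_sub_le_sum_mul_log {ι : Type*} {s : Finset ι} (hs : s.Nonempty)
    {f : ι → ℝ} (hf : ∀ i ∈ s, 0 ≤ f i) :
    (∑ i ∈ s, f i) * log (∑ i ∈ s, f i) - (∑ i ∈ s, f i) * log #s ≤
      ∑ i ∈ s, f i * log (f i) := by
  set t := ∑ i ∈ s, f i
  have hn : (0 : ℝ) < #s := by exact_mod_cast hs.card_pos
  have jensen := convexOn_mul_log.map_sum_le (t := s) (w := fun _ => (#s : ℝ)⁻¹) (p := f)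
    (fun _ _ => by positivity) (by simp [hn.ne']) (fun i hi => hf i hi)
  simp only [smul_eq_mul, ← mul_sum] at jensen
  rw [inv_mul_eq_div, inv_mul_eq_div, div_mul_eq_mul_div, div_le_div_iff_of_pos_right hn]
    at jensen
  have hsplit : t * log (t / #s) = t * log t - t * log #s := by
    rcases eq_or_ne t 0 with h | h
    · simp [h]
    · rw [log_div h hn.ne', mul_sub]
  linarith

namespace SequenceForm

section Children

variable {J S : Type*} [Fintype J] [DecidableEq S]

def children (p : J → S) (σ : S) : Finset J := univ.filter (p · = σ)

theorem sum_mul_comp_eq_sum_mul_sum_children [Fintype S] (p : J → S) (f : J → ℝ) (x : S → ℝ) :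
    ∑ j, f j * x (p j) = ∑ σ, x σ * ∑ j ∈ children p σ, f j := by
  rw [← sum_fiberwise univ p]
  refine sum_congr rfl fun σ _ => ?_
  rw [mul_sum]
  refine sum_congr rfl fun j hj => ?_
  rw [(mem_filter.1 hj).2, mul_comm]

end Children

variable {J : Type*} {A : J → Type*} (p : J → Option (Σ j, A j))

def IsChild (j' j : J) : Prop := ∃ a : A j, p j' = some ⟨j, a⟩

/-- `j` lies on the play of the pure strategy `c`: every sequence on the path from the root to `j`
is the one `c` chooses. -/
def Reached (c : ∀ j, A j) (j : J) : Prop :=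
  ∀ k i a, Relation.ReflTransGen (IsChild p) j k → p k = some ⟨i, a⟩ → a = c i

section Reached

variable {p} {c : ∀ j, A j} {j : J}

theorem reached_of_parent_eq_none (h : p j = none) : Reached p c j := by
  intro k i a hk hpk
  rcases Relation.ReflTransGen.cases_head_iff.1 hk with rfl | ⟨_, ⟨_, hj⟩, -⟩
  · simp [h] at hpk
  · simp [h] at hj

theorem reached_iff_of_parent_eq_some {i : J} {a : A i} (h : p j = some ⟨i, a⟩) :
    Reached p c j ↔ a = c i ∧ Reached p c i := by
  constructor
  · intro hr
    exact ⟨hr j i a .refl h, fun k i' a' hk => hr k i' a' (.head ⟨a, h⟩ hk)⟩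
  · rintro ⟨rfl, hr⟩ k i' a' hk hpk
    rcases Relation.ReflTransGen.cases_head_iff.1 hk with rfl | ⟨i'', ⟨a'', hj⟩, hk'⟩
    · rw [h] at hpk
      cases hpk
      rfl
    · rw [h] at hj
      cases hj
      exact hr k i' a' hk' hpk

end Reached

section PureStrategy

variable [∀ j, DecidableEq (A j)] (c : ∀ j, A j)

open Classical in
noncomputable def pureStrategy : Option (Σ j, A j) → ℝ
  | none => 1
  | some ⟨j, a⟩ => if a = c j ∧ Reached p c j then 1 else 0

variable {p c}

theorem pureStrategy_nonneg (σ : Option (Σ j, A j)) : 0 ≤ pureStrategy p c σ := by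
  rcases σ with _ | ⟨j, a⟩
  · exact zero_le_one
  · simp only [pureStrategy]
    split_ifs <;> norm_num

open Classical in
theorem pureStrategy_parent (j : J) :
    pureStrategy p c (p j) = if Reached p c j then 1 else 0 := by
  rcases hj : p j with _ | ⟨i, a⟩
  · simp [pureStrategy, reached_of_parent_eq_none hj]
  · simp [pureStrategy, reached_iff_of_parent_eq_some hj]

theorem pureStrategy_some (j : J) (a : A j) :
    pureStrategy p c (some ⟨j, a⟩) = if a = c j then pureStrategy p c (p j) else 0 := by
  rw [pureStrategy_parent]
  simp only [pureStrategy]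
  split_ifs <;> simp_all

end PureStrategy

variable [∀ j, Fintype (A j)]

def polytope : Set (Option (Σ j, A j) → ℝ) :=
  {x | (∀ σ, 0 ≤ x σ) ∧ x none = 1 ∧ ∀ j : J, ∑ a : A j, x (some ⟨j, a⟩) = x (p j)}

/-- `x (p j) * ψ_j (x_j / x (p j))` for the normalised negative entropy
`ψ_j b = log |A j| + ∑ a, b a * log (b a)`, written so that it also makes sense at `x (p j) = 0`. -/
noncomputable def dilatedNegEntropy (x : Option (Σ j, A j) → ℝ) (j : J) : ℝ :=
  x (p j) * log (Fintype.card (A j)) + ∑ a, x (some ⟨j, a⟩) * log (x (some ⟨j, a⟩)) -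
    x (p j) * log (x (p j))

section LocalEntropy

variable {p} {x : Option (Σ j, A j) → ℝ}

theorem dilatedNegEntropy_nonneg (hx : x ∈ polytope p) (j : J) [Nonempty (A j)] :
    0 ≤ dilatedNegEntropy p x j := by
  have := mul_log_sum_sub_le_sum_mul_log univ_nonempty fun a _ => hx.1 (some ⟨j, a⟩)
  rw [hx.2.2 j, card_univ] at this
  unfold dilatedNegEntropy
  linarith

theorem dilatedNegEntropy_le (hx : x ∈ polytope p) (j : J) :
    dilatedNegEntropy p x j ≤ x (p j) * log (Fintype.card (A j)) := by
  have := sum_mul_log_le_sum_mul_log_sum univ fun a _ => hx.1 (some ⟨j, a⟩)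
  rw [hx.2.2 j] at this
  unfold dilatedNegEntropy
  linarith

end LocalEntropy

theorem pureStrategy_mem_polytope [∀ j, DecidableEq (A j)] (c : ∀ j, A j) :
    pureStrategy p c ∈ polytope p :=
  ⟨pureStrategy_nonneg, rfl, fun j => by simp [pureStrategy_some]⟩

variable [Fintype J]

noncomputable def dilatableEntropy (γ : J → ℝ) (w x : Option (Σ j, A j) → ℝ) : ℝ :=
  w none * (x none * log (x none)) +
    ∑ j, ∑ a, w (some ⟨j, a⟩) * (x (some ⟨j, a⟩) * log (x (some ⟨j, a⟩))) +
    ∑ j, γ j * (x (p j) * log (Fintype.card (A j)))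

theorem sum_abs_eq_one_add_sum_parent {x : Option (Σ j, A j) → ℝ} (hx : x ∈ polytope p) :
    ∑ σ, |x σ| = 1 + ∑ j, x (p j) := by
  obtain ⟨h0, h1, hflow⟩ := hx
  simp only [abs_of_nonneg (h0 _), Fintype.sum_option, Fintype.sum_sigma, h1, hflow]

variable [DecidableEq J] [∀ j, DecidableEq (A j)]

def IsTreeWeight [∀ j, Nonempty (A j)] (γ : J → ℝ) : Prop :=
  ∀ j, γ j = 1 + (univ : Finset (A j)).sup' univ_nonempty
    (fun a => ∑ j' ∈ children p (some ⟨j, a⟩), γ j')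

section Weights

variable [∀ j, Nonempty (A j)] {p} {γ : J → ℝ}

theorem IsTreeWeight.sum_children_le (hγ : IsTreeWeight p γ) (j : J) (a : A j) :
    ∑ j' ∈ children p (some ⟨j, a⟩), γ j' ≤ γ j - 1 := by
  rw [hγ j]
  linarith [le_sup' (fun a => ∑ j' ∈ children p (some ⟨j, a⟩), γ j') (mem_univ a)]

theorem IsTreeWeight.exists_sum_children_eq (hγ : IsTreeWeight p γ) (j : J) :
    ∃ a, ∑ j' ∈ children p (some ⟨j, a⟩), γ j' = γ j - 1 := by
  obtain ⟨a, -, ha⟩ := exists_mem_eq_sup' univ_nonempty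
    (fun a => ∑ j' ∈ children p (some ⟨j, a⟩), γ j')
  exact ⟨a, by rw [hγ j, ← ha]; ring⟩

theorem IsTreeWeight.one_le (hγ : IsTreeWeight p γ) (hwf : WellFounded (IsChild p)) (j : J) :
    1 ≤ γ j := by
  induction j using hwf.induction with
  | _ j ih =>
    obtain ⟨a, ha⟩ := hγ.exists_sum_children_eq j
    have : 0 ≤ ∑ j' ∈ children p (some ⟨j, a⟩), γ j' :=
      sum_nonneg fun j' hj' => zero_le_one.trans (ih j' ⟨a, (mem_filter.1 hj').2⟩)
    linarith

end Weights

theorem sum_mul_parent_le_sq {γ : J → ℝ} (hγ : ∀ j, 1 ≤ γ j)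
    (hchild : ∀ j a, ∑ j' ∈ children p (some ⟨j, a⟩), γ j' ≤ γ j - 1)
    {x : Option (Σ j, A j) → ℝ} (hx : x ∈ polytope p) :
    ∑ j, γ j * x (p j) ≤ (∑ j ∈ children p none, γ j) ^ 2 := by
  obtain ⟨h0, h1, hflow⟩ := hx
  have hγ0 : ∀ j, 0 ≤ γ j := fun j => zero_le_one.trans (hγ j)
  have hchild_sq : ∀ j a, ∑ j' ∈ children p (some ⟨j, a⟩), γ j' ^ 2 ≤ (γ j - 1) ^ 2 :=
    fun j a => (sum_sq_le_sq_sum_of_nonneg fun j' _ => hγ0 j').trans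
      (pow_le_pow_left₀ (sum_nonneg fun j' _ => hγ0 j') (hchild j a) 2)
  have hsq : ∑ j, γ j ^ 2 * x (p j) ≤
      (∑ j ∈ children p none, γ j) ^ 2 + ∑ j, (γ j - 1) ^ 2 * x (p j) := by
    rw [sum_mul_comp_eq_sum_mul_sum_children, Fintype.sum_option, Fintype.sum_sigma, h1, one_mul]
    gcongr (?_ + ∑ j, ?_) with j
    · exact sum_sq_le_sq_sum_of_nonneg fun j' _ => hγ0 j'
    · rw [← hflow j, mul_sum]
      exact sum_le_sum fun a _ =>
        (mul_comm _ _).trans_le (mul_le_mul_of_nonneg_right (hchild_sq j a) (h0 _))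
  have hlin : ∑ j, γ j * x (p j) ≤ ∑ j, γ j ^ 2 * x (p j) - ∑ j, (γ j - 1) ^ 2 * x (p j) := by
    rw [← sum_sub_distrib]
    exact sum_le_sum fun j _ => by nlinarith [hγ j, h0 (p j)]
  linarith

theorem sum_children_none_le_sum_pureStrategy_parent {γ : J → ℝ} {c : ∀ j, A j}
    (hc : ∀ j, γ j - 1 ≤ ∑ j' ∈ children p (some ⟨j, c j⟩), γ j') :
    ∑ j ∈ children p none, γ j ≤ ∑ j, pureStrategy p c (p j) := by
  have htel : ∑ j, γ j * pureStrategy p c (p j) = ∑ j ∈ children p none, γ j +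
      ∑ j, pureStrategy p c (p j) * ∑ j' ∈ children p (some ⟨j, c j⟩), γ j' := by
    rw [sum_mul_comp_eq_sum_mul_sum_children, Fintype.sum_option, Fintype.sum_sigma]
    congr 1
    · exact one_mul _
    · simp only [pureStrategy_some, ite_mul, zero_mul, sum_ite_eq', mem_univ, if_true]
  have hle : ∑ j, γ j * pureStrategy p c (p j) - ∑ j, pureStrategy p c (p j) ≤
      ∑ j, pureStrategy p c (p j) * ∑ j' ∈ children p (some ⟨j, c j⟩), γ j' := by
    rw [← sum_sub_distrib]
    refine sum_le_sum fun j _ => ?_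
    rw [← sub_one_mul, mul_comm]
    exact mul_le_mul_of_nonneg_left (hc j) (pureStrategy_nonneg _)
  linarith

theorem IsTreeWeight.exists_mem_polytope_one_add_le_sum_abs [∀ j, Nonempty (A j)] {γ : J → ℝ}
    (hγ : IsTreeWeight p γ) :
    ∃ y ∈ polytope p, 1 + ∑ j ∈ children p none, γ j ≤ ∑ σ, |y σ| := by
  choose c hc using hγ.exists_sum_children_eq
  refine ⟨pureStrategy p c, pureStrategy_mem_polytope p c, ?_⟩
  rw [sum_abs_eq_one_add_sum_parent p (pureStrategy_mem_polytope p c)]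
  linarith [sum_children_none_le_sum_pureStrategy_parent p fun j => (hc j).ge]

section GlobalEntropy

variable {p} {γ : J → ℝ} {w x : Option (Σ j, A j) → ℝ}

theorem dilatableEntropy_eq_sum_mul_dilatedNegEntropy
    (hw : ∀ j a, w (some ⟨j, a⟩) = γ j - ∑ j' ∈ children p (some ⟨j, a⟩), γ j')
    (hx : x none = 1) :
    dilatableEntropy p γ w x = ∑ j, γ j * dilatedNegEntropy p x j := by
  have htel := sum_mul_comp_eq_sum_mul_sum_children p γ (fun σ => x σ * log (x σ))
  rw [Fintype.sum_option, Fintype.sum_sigma, hx, log_one, mul_zero, zero_mul, zero_add] at htel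
  have hweighted : ∑ j, ∑ a, w (some ⟨j, a⟩) * (x (some ⟨j, a⟩) * log (x (some ⟨j, a⟩))) =
      ∑ j, γ j * ∑ a, x (some ⟨j, a⟩) * log (x (some ⟨j, a⟩)) -
        ∑ j, γ j * (x (p j) * log (x (p j))) := by
    rw [htel, ← sum_sub_distrib]
    refine sum_congr rfl fun j _ => ?_
    rw [mul_sum, ← sum_sub_distrib]
    exact sum_congr rfl fun a _ => by rw [hw]; ring
  rw [dilatableEntropy, hx, log_one, mul_zero, mul_zero, zero_add, hweighted, ← sum_sub_distrib,
    ← sum_add_distrib]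
  exact sum_congr rfl fun j _ => by unfold dilatedNegEntropy; ring

theorem dilatableEntropy_nonneg [∀ j, Nonempty (A j)] (hγ : ∀ j, 0 ≤ γ j)
    (hw : ∀ j a, w (some ⟨j, a⟩) = γ j - ∑ j' ∈ children p (some ⟨j, a⟩), γ j')
    (hx : x ∈ polytope p) : 0 ≤ dilatableEntropy p γ w x := by
  rw [dilatableEntropy_eq_sum_mul_dilatedNegEntropy hw hx.2.1]
  exact sum_nonneg fun j _ => mul_nonneg (hγ j) (dilatedNegEntropy_nonneg hx j)

theorem dilatableEntropy_le_sq_mul (hγ : ∀ j, 1 ≤ γ j)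
    (hchild : ∀ j a, ∑ j' ∈ children p (some ⟨j, a⟩), γ j' ≤ γ j - 1)
    (hw : ∀ j a, w (some ⟨j, a⟩) = γ j - ∑ j' ∈ children p (some ⟨j, a⟩), γ j')
    (hx : x ∈ polytope p) {L : ℝ} (hL0 : 0 ≤ L) (hL : ∀ j, log (Fintype.card (A j)) ≤ L) :
    dilatableEntropy p γ w x ≤ (∑ j ∈ children p none, γ j) ^ 2 * L := by
  have hγ0 : ∀ j, 0 ≤ γ j := fun j => zero_le_one.trans (hγ j)
  calc dilatableEntropy p γ w x = ∑ j, γ j * dilatedNegEntropy p x j :=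
        dilatableEntropy_eq_sum_mul_dilatedNegEntropy hw hx.2.1
    _ ≤ ∑ j, γ j * (x (p j) * L) := by
        gcongr with j
        · exact hγ0 j
        · exact (dilatedNegEntropy_le hx j).trans
            (mul_le_mul_of_nonneg_left (hL j) (hx.1 (p j)))
    _ = (∑ j, γ j * x (p j)) * L := by simp only [sum_mul, mul_assoc]
    _ ≤ (∑ j ∈ children p none, γ j) ^ 2 * L := by
        gcongr
        exact sum_mul_parent_le_sq p hγ hchild hx

end GlobalEntropy

theorem dilatableEntropy_mem_Icc [Nonempty J] [∀ j, Nonempty (A j)] {γ : J → ℝ}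
    {w x : Option (Σ j, A j) → ℝ} (hγ : IsTreeWeight p γ) (hwf : WellFounded (IsChild p))
    (hw : ∀ j a, w (some ⟨j, a⟩) = γ j - ∑ j' ∈ children p (some ⟨j, a⟩), γ j') {M : ℝ}
    (hM : IsGreatest ((fun x : Option (Σ j, A j) → ℝ => ∑ σ, |x σ|) '' polytope p) M)
    (hx : x ∈ polytope p) :
    dilatableEntropy p γ w x ∈
      Set.Icc 0 (M ^ 2 * univ.sup' univ_nonempty fun j => log (Fintype.card (A j))) := by
  have hγ1 := hγ.one_le hwf
  set L := univ.sup' univ_nonempty fun j => log (Fintype.card (A j))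
  have hL : ∀ j, log (Fintype.card (A j)) ≤ L := fun j =>
    le_sup' (fun j => log (Fintype.card (A j) : ℝ)) (mem_univ j)
  have hL0 : 0 ≤ L :=
    (log_nonneg (by exact_mod_cast Fintype.card_pos)).trans (hL (Classical.arbitrary J))
  obtain ⟨y, hy, hyM⟩ := hγ.exists_mem_polytope_one_add_le_sum_abs
  have hsq : (∑ j ∈ children p none, γ j) ^ 2 ≤ M ^ 2 :=
    pow_le_pow_left₀ (sum_nonneg fun j _ => zero_le_one.trans (hγ1 j))
      (by linarith [hM.2 ⟨y, hy, rfl⟩]) 2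
  exact ⟨dilatableEntropy_nonneg (fun j => zero_le_one.trans (hγ1 j)) hw hx,
    (dilatableEntropy_le_sq_mul hγ1 hγ.sum_children_le hw hx hL0 hL).trans
      (mul_le_mul_of_nonneg_right hsq hL0)⟩

end SequenceForm

theorem dge_diameter_bound_general
    {J : Type} [Fintype J] [DecidableEq J] [Nonempty J]
    {A : J → Type} [∀ j, Fintype (A j)] [∀ j, DecidableEq (A j)] [∀ j, Nonempty (A j)]
    (p : J → Option ((j : J) × A j))
    (hwf : WellFounded (fun j' j : J => ∃ a : A j, p j' = some ⟨j, a⟩))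
    (γ : J → ℝ)
    (hγ : ∀ j : J, γ j = 1 + (Finset.univ : Finset (A j)).sup' Finset.univ_nonempty
        (fun a => ∑ j' ∈ Finset.univ.filter (fun j' => p j' = some ⟨j, a⟩), γ j'))
    (w : Option ((j : J) × A j) → ℝ)
    (hw : ∀ (j : J) (a : A j),
      w (some ⟨j, a⟩) = γ j - ∑ j' ∈ Finset.univ.filter (fun j' => p j' = some ⟨j, a⟩), γ j')
    (Q : Set (Option ((j : J) × A j) → ℝ))
    (hQ : Q = {x | (∀ σ, 0 ≤ x σ) ∧ x none = 1 ∧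
        ∀ j : J, ∑ a : A j, x (some ⟨j, a⟩) = x (p j)})
    (M : ℝ)
    (hM : IsGreatest ((fun x : Option ((j : J) × A j) → ℝ => ∑ σ, |x σ|) '' Q) M)
    (φ : (Option ((j : J) × A j) → ℝ) → ℝ)
    (hφ : φ = fun x => w none * (x none * Real.log (x none))
      + (∑ j : J, ∑ a : A j, w (some ⟨j, a⟩) * (x (some ⟨j, a⟩) * Real.log (x (some ⟨j, a⟩))))
      + (∑ j : J, γ j * (x (p j) * Real.log ((Fintype.card (A j) : ℝ))))) :
    (∀ x ∈ Q, 0 ≤ φ x ∧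
      φ x ≤ M ^ 2 * (Finset.univ : Finset J).sup' Finset.univ_nonempty
        (fun j => Real.log ((Fintype.card (A j) : ℝ)))) ∧
    (∀ x ∈ Q, ∀ y ∈ Q,
      φ x - φ y ≤ M ^ 2 * (Finset.univ : Finset J).sup' Finset.univ_nonempty
        (fun j => Real.log ((Fintype.card (A j) : ℝ)))) := by
  obtain rfl : Q = SequenceForm.polytope p := hQ
  obtain rfl : φ = SequenceForm.dilatableEntropy p γ w := hφ
  have hbounds := fun x (hx : x ∈ SequenceForm.polytope p) =>
    SequenceForm.dilatableEntropy_mem_Icc p hγ hwf hw hM hx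
  exact ⟨hbounds, fun x hx y hy => by linarith [(hbounds x hx).2, (hbounds y hy).1]⟩

/-- **Diameter bound.** Assuming `J` nonempty, for every `x ∈ Q` the dilatable global entropy
satisfies `0 ≤ φ̃ x ≤ M_Q² · max_{j∈J} log |A j|`, where `M_Q = max_{x∈Q} ‖x‖₁`.
Consequently the `φ̃`-range of `Q` is at most `M_Q² · max_{j∈J} log |A j|`. -/
theorem dge_diameter_bound
    {J : Type} [Fintype J] [DecidableEq J] [Nonempty J]
    {A : J → Type} [∀ j, Fintype (A j)] [∀ j, DecidableEq (A j)] [∀ j, Nonempty (A j)]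
    (p : J → Option ((j : J) × A j))
    (hwf : WellFounded (fun j' j : J => ∃ a : A j, p j' = some ⟨j, a⟩))
    (γ : J → ℝ) (γ0 : ℝ)
    (hγ : ∀ j : J, γ j = 1 + (Finset.univ : Finset (A j)).sup' Finset.univ_nonempty
        (fun a => ∑ j' ∈ Finset.univ.filter (fun j' => p j' = some ⟨j, a⟩), γ j'))
    (hγ0 : γ0 = 1 + ∑ j ∈ Finset.univ.filter (fun j : J => p j = none), γ j)
    (w : Option ((j : J) × A j) → ℝ)
    (hw0 : w none = γ0 - ∑ j ∈ Finset.univ.filter (fun j : J => p j = none), γ j)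
    (hw : ∀ (j : J) (a : A j),
      w (some ⟨j, a⟩) = γ j - ∑ j' ∈ Finset.univ.filter (fun j' => p j' = some ⟨j, a⟩), γ j')
    (Q : Set (Option ((j : J) × A j) → ℝ))
    (hQ : Q = {x | (∀ σ, 0 ≤ x σ) ∧ x none = 1 ∧
        ∀ j : J, ∑ a : A j, x (some ⟨j, a⟩) = x (p j)})
    (M : ℝ)
    (hM : IsGreatest ((fun x : Option ((j : J) × A j) → ℝ => ∑ σ, |x σ|) '' Q) M)
    (φ : (Option ((j : J) × A j) → ℝ) → ℝ)
    (hφ : φ = fun x => w none * (x none * Real.log (x none))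
      + (∑ j : J, ∑ a : A j, w (some ⟨j, a⟩) * (x (some ⟨j, a⟩) * Real.log (x (some ⟨j, a⟩))))
      + (∑ j : J, γ j * (x (p j) * Real.log ((Fintype.card (A j) : ℝ))))) :
    (∀ x ∈ Q, 0 ≤ φ x ∧
      φ x ≤ M ^ 2 * (Finset.univ : Finset J).sup' Finset.univ_nonempty
        (fun j => Real.log ((Fintype.card (A j) : ℝ)))) ∧
    (∀ x ∈ Q, ∀ y ∈ Q,
      φ x - φ y ≤ M ^ 2 * (Finset.univ : Finset J).sup' Finset.univ_nonempty
        (fun j => Real.log ((Fintype.card (A j) : ℝ)))) :=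
  dge_diameter_bound_general p hwf γ hγ w hw Q hQ M hM φ hφ
end

section
/- Lemma (relative interior commutes with scaled extension). Let U ⊂ ℝ^m and V ⊂ ℝ^n be nonempty bounded convex sets, and let h : ℝ^m → ℝ be an affine function h(u) = a·u + b that is nonnegative on U and strictly positive on relint U. Then relint(U ◁^h V) = (relint U) ◁^h (relint V). -/
/-!
Fix `v ∈ V`: then `U` is the preimage of `U ◁^h V` under the affine map `u ↦ (u, h u • v)`, and,
for `u ∈ U` with `h u ≠ 0`, `V` is its preimage under `v ↦ (u, h u • v)`. Since preimages under
continuous affine maps only enlarge the relative interior, this gives `⊆`. Conversely, near a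
point where `h u ≠ 0`, the map `(u, w) ↦ (u, (h u)⁻¹ • w)` is continuous, sends the affine span of
`U ◁^h V` into that of `U ×ˢ V`, and pulls `U ×ˢ V` back into `U ◁^h V`; so it pulls relative
interior points of `U ×ˢ V = relint U ×ˢ relint V` back to relative interior points of `U ◁^h V`.
-/
open Set Filter Topology

section IntrinsicInterior

variable {𝕜 V W P Q : Type*} [Ring 𝕜] [AddCommGroup V] [Module 𝕜 V] [AddTorsor V P]
  [AddCommGroup W] [Module 𝕜 W] [AddTorsor W Q] {s : Set P} {t : Set Q} {x : P}

theorem AffineMap.mapsTo_affineSpan (f : P →ᵃ[𝕜] Q) (hst : MapsTo f s t) :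
    MapsTo f (affineSpan 𝕜 s) (affineSpan 𝕜 t) := fun x hx =>
  affineSpan_mono 𝕜 hst.image_subset
    (AffineSubspace.map_span f s ▸ AffineSubspace.mem_map.2 ⟨x, hx, rfl⟩)

variable [TopologicalSpace P] [TopologicalSpace Q]

theorem mem_intrinsicInterior_iff_mem_nhdsWithin :
    x ∈ intrinsicInterior 𝕜 s ↔ x ∈ s ∧ s ∈ 𝓝[(affineSpan 𝕜 s : Set P)] x := by
  constructor
  · rintro ⟨y, hy, rfl⟩
    refine ⟨interior_subset (s := Subtype.val ⁻¹' s) hy, ?_⟩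
    exact mem_of_superset (mem_nhds_subtype_iff_nhdsWithin.1 (mem_interior_iff_mem_nhds.1 hy))
      (image_preimage_subset _ _)
  · rintro ⟨hxs, hs⟩
    refine ⟨⟨x, subset_affineSpan 𝕜 s hxs⟩, mem_interior_iff_mem_nhds.2 ?_, rfl⟩
    rw [mem_nhds_subtype_iff_nhdsWithin]
    exact mem_of_superset (inter_mem hs self_mem_nhdsWithin) fun z hz => ⟨⟨z, hz.2⟩, hz.1, rfl⟩

theorem mem_intrinsicInterior_of_tendsto {g : Q → P} {y : Q} (hy : y ∈ t)
    (hg : Tendsto g (𝓝[(affineSpan 𝕜 t : Set Q)] y) (𝓝[(affineSpan 𝕜 s : Set P)] (g y)))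
    (hgy : g y ∈ intrinsicInterior 𝕜 s)
    (hback : ∀ᶠ z in 𝓝[(affineSpan 𝕜 t : Set Q)] y, g z ∈ s → z ∈ t) :
    y ∈ intrinsicInterior 𝕜 t :=
  mem_intrinsicInterior_iff_mem_nhdsWithin.2
    ⟨hy, ((hg.eventually (mem_intrinsicInterior_iff_mem_nhdsWithin.1 hgy).2).and hback).mono
      fun _ hz => hz.2 hz.1⟩

theorem AffineMap.preimage_intrinsicInterior_subset (f : P →ᵃ[𝕜] Q) (hf : Continuous f)
    (t : Set Q) : f ⁻¹' intrinsicInterior 𝕜 t ⊆ intrinsicInterior 𝕜 (f ⁻¹' t) := fun x hx =>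
  mem_intrinsicInterior_of_tendsto (intrinsicInterior_subset hx : f x ∈ t)
    (tendsto_nhdsWithin_iff.2 ⟨hf.continuousWithinAt.tendsto,
      eventually_nhdsWithin_of_forall (f.mapsTo_affineSpan (mapsTo_preimage f t))⟩)
    hx (Eventually.of_forall fun _ hz => hz)

end IntrinsicInterior

section ScaledExtension

variable {𝕜 E F : Type*} [Field 𝕜] [AddCommGroup E] [Module 𝕜 E]
  [AddCommGroup F] [Module 𝕜 F]

def scaledExtension (h : E → 𝕜) (U : Set E) (V : Set F) : Set (E × F) :=
  {z | ∃ u ∈ U, ∃ v ∈ V, z = (u, h u • v)}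

variable {h : E →ᵃ[𝕜] 𝕜} {U : Set E} {V : Set F}

theorem preimage_graph_scaledExtension {v : F} (hv : v ∈ V) :
    (AffineMap.id 𝕜 E).prod ((LinearMap.toSpanSingleton 𝕜 F v).toAffineMap.comp h) ⁻¹'
      scaledExtension h U V = U := by
  ext u
  constructor
  · rintro ⟨u', hu', _, _, hz⟩
    rwa [show u = u' from congrArg Prod.fst hz]
  · intro hu
    exact ⟨u, hu, v, hv, rfl⟩

theorem preimage_fibre_scaledExtension {u : E} (hu : u ∈ U) (hu₀ : h u ≠ 0) :
    (AffineMap.const 𝕜 F u).prod (h u • AffineMap.id 𝕜 F) ⁻¹' scaledExtension h U V = V := by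
  ext v
  constructor
  · rintro ⟨u', -, v', hv', hz⟩
    obtain ⟨rfl, hz⟩ := Prod.ext_iff.1 hz
    exact (smul_right_injective F hu₀ hz : v = v') ▸ hv'
  · intro hv
    exact ⟨u, hu, v, hv, rfl⟩

theorem fst_mem_affineSpan_of_mem_affineSpan_scaledExtension {z : E × F}
    (hz : z ∈ affineSpan 𝕜 (scaledExtension h U V)) : z.1 ∈ affineSpan 𝕜 U :=
  (AffineMap.fst : E × F →ᵃ[𝕜] E).mapsTo_affineSpan
    (by rintro _ ⟨u, hu, v, -, rfl⟩; exact hu) hz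

theorem inv_smul_snd_mem_affineSpan_of_mem_affineSpan_scaledExtension {z : E × F}
    (hz : z ∈ affineSpan 𝕜 (scaledExtension h U V)) (hz₀ : h z.1 ≠ 0) :
    (h z.1)⁻¹ • z.2 ∈ affineSpan 𝕜 V := by
  rcases V.eq_empty_or_nonempty with rfl | ⟨v, hv⟩
  · rw [show scaledExtension h U (∅ : Set F) = ∅ by simp [scaledExtension],
      AffineSubspace.span_empty] at hz
    exact absurd hz (AffineSubspace.notMem_bot 𝕜 (E × F) z)
  set D := (affineSpan 𝕜 V).direction
  let q : E × F →ᵃ[𝕜] F := (LinearMap.snd 𝕜 E F).toAffineMap -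
    (LinearMap.toSpanSingleton 𝕜 F v).toAffineMap.comp (h.comp AffineMap.fst)
  have hq : ∀ p : E × F, q p = p.2 - h p.1 • v := fun _ => rfl
  have hqz : q z ∈ D := by
    have := q.mapsTo_affineSpan (t := (D.toAffineSubspace : Set F)) ?_ hz
    · simpa [AffineSubspace.affineSpan_coe] using this
    rintro _ ⟨u, -, v', hv', rfl⟩
    rw [SetLike.mem_coe, Submodule.mem_toAffineSubspace, hq, ← smul_sub]
    exact D.smul_mem _ (AffineSubspace.vsub_mem_direction (subset_affineSpan 𝕜 V hv')
      (subset_affineSpan 𝕜 V hv))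
  have : (h z.1)⁻¹ • z.2 = (h z.1)⁻¹ • q z +ᵥ v := by
    rw [hq, vadd_eq_add, smul_sub, inv_smul_smul₀ hz₀, sub_add_cancel]
  rw [this]
  exact AffineSubspace.vadd_mem_of_mem_direction (D.smul_mem _ hqz) (subset_affineSpan 𝕜 V hv)

variable [TopologicalSpace 𝕜] [TopologicalSpace E] [TopologicalSpace F] [ContinuousSMul 𝕜 F]

theorem intrinsicInterior_scaledExtension_subset (hh : Continuous h)
    (hU : ∀ u ∈ intrinsicInterior 𝕜 U, h u ≠ 0) :
    intrinsicInterior 𝕜 (scaledExtension h U V) ⊆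
      scaledExtension h (intrinsicInterior 𝕜 U) (intrinsicInterior 𝕜 V) := by
  intro z hz
  obtain ⟨u, hu, v, hv, rfl⟩ := intrinsicInterior_subset hz
  have hu' : u ∈ intrinsicInterior 𝕜 U := by
    rw [← preimage_graph_scaledExtension (h := h) (U := U) hv]
    exact AffineMap.preimage_intrinsicInterior_subset _
      (continuous_id.prodMk (hh.smul continuous_const)) _ hz
  have hv' : v ∈ intrinsicInterior 𝕜 V := by
    rw [← preimage_fibre_scaledExtension (h := h) (V := V) hu (hU u hu')]
    exact AffineMap.preimage_intrinsicInterior_subset _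
      (continuous_const.prodMk (continuous_const.smul continuous_id)) _ hz
  exact ⟨u, hu', v, hv', rfl⟩

variable [T1Space 𝕜] [ContinuousInv₀ 𝕜]

theorem scaledExtension_intrinsicInterior_subset (hh : Continuous h)
    (hU : ∀ u ∈ intrinsicInterior 𝕜 U, h u ≠ 0) :
    scaledExtension h (intrinsicInterior 𝕜 U) (intrinsicInterior 𝕜 V) ⊆
      intrinsicInterior 𝕜 (scaledExtension h U V) := by
  rintro _ ⟨u, hu, v, hv, rfl⟩
  have hu₀ := hU u hu
  let g : E × F → E × F := fun p => (p.1, (h p.1)⁻¹ • p.2)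
  have hh₁ : ContinuousAt (fun p : E × F => h p.1) (u, h u • v) :=
    (hh.comp continuous_fst).continuousAt
  have hg : ContinuousAt g (u, h u • v) :=
    continuous_fst.continuousAt.prodMk ((hh₁.inv₀ hu₀).smul continuous_snd.continuousAt)
  have hne : ∀ᶠ p : E × F in 𝓝 (u, h u • v), h p.1 ≠ 0 := hh₁.eventually_ne hu₀
  refine mem_intrinsicInterior_of_tendsto (g := g) (s := U ×ˢ V)
    ⟨u, intrinsicInterior_subset hu, v, intrinsicInterior_subset hv, rfl⟩ ?_ ?_ ?_
  · refine tendsto_nhdsWithin_iff.2 ⟨hg.tendsto.mono_left nhdsWithin_le_nhds, ?_⟩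
    filter_upwards [self_mem_nhdsWithin, nhdsWithin_le_nhds hne] with p hp hp₀
    rw [affineSpan_prod_eq, SetLike.mem_coe, AffineSubspace.mem_prod]
    dsimp only [g]
    exact ⟨fst_mem_affineSpan_of_mem_affineSpan_scaledExtension hp,
      inv_smul_snd_mem_affineSpan_of_mem_affineSpan_scaledExtension hp hp₀⟩
  · simp only [g, inv_smul_smul₀ hu₀, intrinsicInterior_prod_eq]
    exact ⟨hu, hv⟩
  · filter_upwards [nhdsWithin_le_nhds hne] with p hp₀ ⟨hp₁, hp₂⟩
    exact ⟨p.1, hp₁, _, hp₂, by simp only [g, smul_inv_smul₀ hp₀]⟩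

theorem intrinsicInterior_scaledExtension (hh : Continuous h)
    (hU : ∀ u ∈ intrinsicInterior 𝕜 U, h u ≠ 0) :
    intrinsicInterior 𝕜 (scaledExtension h U V) =
      scaledExtension h (intrinsicInterior 𝕜 U) (intrinsicInterior 𝕜 V) :=
  (intrinsicInterior_scaledExtension_subset hh hU).antisymm
    (scaledExtension_intrinsicInterior_subset hh hU)

end ScaledExtension

theorem relint_scaledExtension_general
    {m n : ℕ}
    (U : Set (Fin m → ℝ)) (V : Set (Fin n → ℝ))
    (h : (Fin m → ℝ) →ᵃ[ℝ] ℝ)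
    (hhpos : ∀ u ∈ intrinsicInterior ℝ U, 0 < h u) :
    intrinsicInterior ℝ
        {z : (Fin m → ℝ) × (Fin n → ℝ) | ∃ u ∈ U, ∃ v ∈ V, z = (u, h u • v)}
      = {z : (Fin m → ℝ) × (Fin n → ℝ) |
          ∃ u ∈ intrinsicInterior ℝ U, ∃ v ∈ intrinsicInterior ℝ V, z = (u, h u • v)} :=
  intrinsicInterior_scaledExtension h.continuous_of_finiteDimensional fun u hu => (hhpos u hu).ne'

/-- **Relative interior commutes with scaled extension.** For nonempty bounded convex sets
`U ⊆ ℝ^m`, `V ⊆ ℝ^n` and an affine `h` nonnegative on `U` and strictly positive on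
`relint U`, one has `relint (U ◁^h V) = (relint U) ◁^h (relint V)`. -/
theorem relint_scaledExtension
    {m n : ℕ}
    (U : Set (Fin m → ℝ)) (V : Set (Fin n → ℝ))
    (hUne : U.Nonempty) (hVne : V.Nonempty)
    (hUb : Bornology.IsBounded U) (hVb : Bornology.IsBounded V)
    (hUconv : Convex ℝ U) (hVconv : Convex ℝ V)
    (h : (Fin m → ℝ) →ᵃ[ℝ] ℝ)
    (hh0 : ∀ u ∈ U, 0 ≤ h u)
    (hhpos : ∀ u ∈ intrinsicInterior ℝ U, 0 < h u) :
    intrinsicInterior ℝ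
        {z : (Fin m → ℝ) × (Fin n → ℝ) | ∃ u ∈ U, ∃ v ∈ V, z = (u, h u • v)}
      = {z : (Fin m → ℝ) × (Fin n → ℝ) |
          ∃ u ∈ intrinsicInterior ℝ U, ∃ v ∈ intrinsicInterior ℝ V, z = (u, h u • v)} :=
  relint_scaledExtension_general U V h hhpos
end

section
/- Lemma (strong-convexity inequality for a dilated DGF on a scaled extension). Let U ⊆ ℝ^m and V ⊆ ℝ^n be compact convex sets, let h : ℝ^m → ℝ be a linear function h(u) = a·u that is nonnegative on U and strictly positive on relint U, let α_v > 0, let d_u : ℝ^m → ℝ be differentiable on relint U, let N be a norm on ℝ^n, and let d_v : ℝ^n → ℝ be differentiable on relint V and 1-strongly convex on relint V with respect to N, i.e., d_v(y′) ≥ d_v(y) + ⟨∇d_v(y), y′−y⟩ + (1/2)·N(y′−y)² for all y, y′ ∈ relint V. Define, for (u,w) ∈ (relint U) ◁^h (relint V), G(u,w) := ( ∇d_u(u) + α_v·[ d_v(w/h(u)) − ⟨∇d_v(w/h(u)), w/h(u)⟩ ]·a , α_v·∇d_v(w/h(u)) ) (the gradient of the map (u,w) ↦ d_u(u) + α_v·h(u)·d_v(w/h(u))).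 Then for all (u,w), (u′,w′) ∈ (relint U) ◁^h (relint V): ⟨G(u,w) − G(u′,w′), (u−u′, w−w′)⟩ ≥ ⟨∇d_u(u) − ∇d_u(u′), u−u′⟩ + α_v·h((u+u′)/2)·N( w/h(u) − w′/h(u′) )². -/
open scoped RealInnerProductSpace

/-- **Strong-convexity inequality for a dilated DGF on a scaled extension** (Lemma 2).
With the gradient `G` of `(u, w) ↦ d_u(u) + α_v·h(u)·d_v(w/h(u))` on
`(relint U) ◁^h (relint V)`, one has
`⟨G(u,w) − G(u′,w′), (u−u′, w−w′)⟩ ≥ ⟨∇d_u(u) − ∇d_u(u′), u−u′⟩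
  + α_v·h((u+u′)/2)·N(w/h(u) − w′/h(u′))²`. -/
theorem dilated_dgf_strong_convexity_ineq
    {m n : ℕ}
    (U : Set (EuclideanSpace ℝ (Fin m))) (V : Set (EuclideanSpace ℝ (Fin n)))
    (hUc : IsCompact U) (hUconv : Convex ℝ U)
    (hVc : IsCompact V) (hVconv : Convex ℝ V)
    (a : EuclideanSpace ℝ (Fin m))
    (hh0 : ∀ u ∈ U, 0 ≤ ⟪a, u⟫)
    (hhpos : ∀ u ∈ intrinsicInterior ℝ U, 0 < ⟪a, u⟫)
    (αv : ℝ) (hαv : 0 < αv)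
    (du : EuclideanSpace ℝ (Fin m) → ℝ)
    (gu : EuclideanSpace ℝ (Fin m) → EuclideanSpace ℝ (Fin m))
    (hdu : ∀ u ∈ intrinsicInterior ℝ U, HasGradientAt du (gu u) u)
    (dv : EuclideanSpace ℝ (Fin n) → ℝ)
    (gv : EuclideanSpace ℝ (Fin n) → EuclideanSpace ℝ (Fin n))
    (hdv : ∀ y ∈ intrinsicInterior ℝ V, HasGradientAt dv (gv y) y)
    (N : Seminorm ℝ (EuclideanSpace ℝ (Fin n)))
    (hsc : ∀ y ∈ intrinsicInterior ℝ V, ∀ y' ∈ intrinsicInterior ℝ V,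
      dv y' ≥ dv y + ⟪gv y, y' - y⟫ + (1 / 2) * (N (y' - y)) ^ 2)
    (G : EuclideanSpace ℝ (Fin m) × EuclideanSpace ℝ (Fin n)
        → EuclideanSpace ℝ (Fin m) × EuclideanSpace ℝ (Fin n))
    (hG : ∀ z : EuclideanSpace ℝ (Fin m) × EuclideanSpace ℝ (Fin n),
      G z = (gu z.1 + (αv * (dv ((⟪a, z.1⟫)⁻¹ • z.2)
              - ⟪gv ((⟪a, z.1⟫)⁻¹ • z.2), (⟪a, z.1⟫)⁻¹ • z.2⟫)) • a,
            αv • gv ((⟪a, z.1⟫)⁻¹ • z.2))) :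
    ∀ u ∈ intrinsicInterior ℝ U, ∀ u' ∈ intrinsicInterior ℝ U,
    ∀ v ∈ intrinsicInterior ℝ V, ∀ v' ∈ intrinsicInterior ℝ V,
      ⟪(G (u, ⟪a, u⟫ • v)).1 - (G (u', ⟪a, u'⟫ • v')).1, u - u'⟫
        + ⟪(G (u, ⟪a, u⟫ • v)).2 - (G (u', ⟪a, u'⟫ • v')).2,
            ⟪a, u⟫ • v - ⟪a, u'⟫ • v'⟫
      ≥ ⟪gu u - gu u', u - u'⟫
        + αv * ⟪a, (1 / 2 : ℝ) • (u + u')⟫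
            * (N ((⟪a, u⟫)⁻¹ • (⟪a, u⟫ • v) - (⟪a, u'⟫)⁻¹ • (⟪a, u'⟫ • v'))) ^ 2 := by

  intro u hu u' hu' v hv v' hv'
  have hne : ⟪a, u⟫ ≠ 0 := ne_of_gt (hhpos u hu)
  have hne' : ⟪a, u'⟫ ≠ 0 := ne_of_gt (hhpos u' hu')
  have hpos : (0:ℝ) < ⟪a, u⟫ := hhpos u hu
  have hpos' : (0:ℝ) < ⟪a, u'⟫ := hhpos u' hu'
  have hsc1 := hsc v' hv' v hv
  have hsc2 := hsc v hv v' hv'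
  have hNrev : N (v' - v) = N (v - v') := by
    rw [← neg_sub, map_neg_eq_map]
  rw [hG, hG]
  simp only [inv_smul_smul₀ hne, inv_smul_smul₀ hne']
  simp only [inner_sub_left, inner_sub_right, inner_add_left, real_inner_smul_left,
    real_inner_smul_right, inner_add_right]
  have hhalf : ⟪a, (1 / 2 : ℝ) • (u + u')⟫ = (1/2) * (⟪a,u⟫ + ⟪a,u'⟫) := by
    rw [real_inner_smul_right, inner_add_right]
  rw [hNrev] at hsc2
  simp only [inner_sub_right] at hsc1 hsc2
  nlinarith [mul_le_mul_of_nonneg_left (sub_nonneg.mpr hsc1) hpos.le,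
    mul_le_mul_of_nonneg_left (sub_nonneg.mpr hsc2) hpos'.le, hαv.le, hhpos u hu,
    mul_pos hαv hpos, sq_nonneg (N (v - v'))]
end

section
/- Proposition (strong convexity of the composite DGF on a scaled extension). Let U ⊆ ℝ^m and V ⊆ ℝ^n be nonempty compact convex sets, let h : ℝ^m → ℝ be a linear function h(u) = a·u that is nonnegative on U and strictly positive on relint U, let α_v > 0, and let d_u : ℝ^m → ℝ and d_v : ℝ^n → ℝ be differentiable on relint U and relint V respectively, with d_u μ_u-strongly convex on relint U and d_v μ_v-strongly convex on relint V with respect to the Euclidean norm (μ_u, μ_v > 0), in the gradient-monotonicity sense ⟨∇d(y)−∇d(y′), y−y′⟩ ≥ μ·‖y−y′‖₂². Define d_z(u,w) := d_u(u) + α_v·h(u)·d_v(w/h(u)) on (relint U) ◁^h (relint V). Then there exists μ > 0 such that for all (u,w), (u′,w′) ∈ (relint U) ◁^h (relint V): ⟨∇d_z(u,w) − ∇d_z(u′,w′), (u−u′, w−w′)⟩ ≥ μ·‖(u,w) − (u′,w′)‖₂², i.e., d_z is strongly convex on the relative interior of U ◁^h V with respect to the Euclidean norm. -/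
/-!
Pairing `∇d_z` at `(u, h(u) v)` and `(u', h(u') v')` with the difference of the points gives
`⟪∇d_u u - ∇d_u u', u - u'⟫ + α_v (h(u) D(v, v') + h(u') D(v', v))`, where `D` is the Bregman
divergence of `d_v`. Both divergences are nonnegative, since `∇d_v` is monotone on the convex set
`relint V`, and they add up to `⟪∇d_v v - ∇d_v v', v - v'⟫ ≥ μ_v ‖v - v'‖²`; so the pairing is at
least `μ_u ‖u - u'‖² + α_v μ_v M ‖v - v'‖²` with `M = min (h(u), h(u'))`. Conversely, by
compactness, `‖h(u) v - h(u') v'‖ ≤ M ‖v - v'‖ + ‖a‖ R_V ‖u - u'‖` and `M ≤ ‖a‖ R_U`, which bounds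
`‖u - u'‖² + ‖h(u) v - h(u') v'‖²` by a constant multiple of `‖u - u'‖² + M ‖v - v'‖²`.
-/

open scoped RealInnerProductSpace

protected theorem Convex.intrinsicInterior {E : Type*} [NormedAddCommGroup E] [NormedSpace ℝ E]
    {s : Set E} (hs : Convex ℝ s) : Convex ℝ (intrinsicInterior ℝ s) := by
  rcases s.eq_empty_or_nonempty with rfl | ⟨p, hp⟩
  · simpa using convex_empty
  let p' : affineSpan ℝ s := ⟨p, subset_affineSpan ℝ s hp⟩
  have : Nonempty (affineSpan ℝ s) := ⟨p'⟩
  -- transport the interior in `affineSpan ℝ s` to its direction, a genuine vector space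
  let e := (AffineIsometryEquiv.constVSub ℝ p').symm
  let g : (affineSpan ℝ s).direction →ᵃ[ℝ] E :=
    (affineSpan ℝ s).subtype.comp e.toAffineEquiv.toAffineMap
  have himg : intrinsicInterior ℝ s = g '' interior (g ⁻¹' s) := by
    rw [intrinsicInterior, ← Set.image_preimage_eq (interior _) e.toHomeomorph.surjective,
      e.toHomeomorph.preimage_interior, Set.image_image]
    rfl
  rw [himg]
  exact (hs.affine_preimage g).interior.affine_image g

section Bregman

variable {E : Type*} [NormedAddCommGroup E] [InnerProductSpace ℝ E]

def bregmanDiv (f : E → ℝ) (g : E → E) (x y : E) : ℝ :=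
  f x - f y - ⟪g y, x - y⟫

theorem bregmanDiv_add_bregmanDiv (f : E → ℝ) (g : E → E) (x y : E) :
    bregmanDiv f g x y + bregmanDiv f g y x = ⟪g x - g y, x - y⟫ := by
  simp only [bregmanDiv, inner_sub_left, inner_sub_right]
  ring

theorem bregmanDiv_nonneg [CompleteSpace E] {S : Set E} (hS : Convex ℝ S)
    {f : E → ℝ} {g : E → E} (hf : ∀ y ∈ S, HasGradientAt f (g y) y)
    (hmono : ∀ y ∈ S, ∀ y' ∈ S, 0 ≤ ⟪g y - g y', y - y'⟫)
    {x y : E} (hx : x ∈ S) (hy : y ∈ S) : 0 ≤ bregmanDiv f g x y := by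
  let c := AffineMap.lineMap (k := ℝ) y x
  have hc : ∀ t ∈ Set.Icc (0 : ℝ) 1, c t ∈ S := fun t ht => hS.lineMap_mem hy hx ht
  have hderiv : ∀ t ∈ Set.Icc (0 : ℝ) 1, HasDerivAt (f ∘ c) ⟪g (c t), x - y⟫ t := fun t ht => by
    simpa using (hf (c t) (hc t ht)).hasFDerivAt.comp_hasDerivAt t
      (AffineMap.hasDerivAt_lineMap (a := y) (b := x) (x := t))
  -- mean value theorem on `[y, x]`; monotonicity of `g` compares the slope at `τ` with that at `0`
  obtain ⟨τ, hτ, hslope⟩ := exists_hasDerivAt_eq_slope (f ∘ c) (fun t => ⟪g (c t), x - y⟫)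
    one_pos (fun t ht => (hderiv t ht).continuousAt.continuousWithinAt)
    (fun t ht => hderiv t (Set.Ioo_subset_Icc_self ht))
  have hτmono : 0 ≤ τ * (⟪g (c τ), x - y⟫ - ⟪g y, x - y⟫) := by
    have := hmono (c τ) (hc τ (Set.Ioo_subset_Icc_self hτ)) y hy
    rwa [← vsub_eq_sub (c τ), AffineMap.lineMap_vsub_left, inner_smul_right,
      inner_sub_left] at this
  have hslope' : ⟪g (c τ), x - y⟫ = f x - f y := by
    simpa [c] using hslope
  rw [bregmanDiv, ← hslope']
  exact nonneg_of_mul_nonneg_right (by linarith) hτ.1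

theorem min_mul_inner_le_mul_bregmanDiv_add [CompleteSpace E] {S : Set E} (hS : Convex ℝ S)
    {f : E → ℝ} {g : E → E} (hf : ∀ y ∈ S, HasGradientAt f (g y) y)
    (hmono : ∀ y ∈ S, ∀ y' ∈ S, 0 ≤ ⟪g y - g y', y - y'⟫)
    {x y : E} (hx : x ∈ S) (hy : y ∈ S) (s t : ℝ) :
    min s t * ⟪g x - g y, x - y⟫ ≤ s * bregmanDiv f g x y + t * bregmanDiv f g y x := by
  have hxy := bregmanDiv_nonneg hS hf hmono hx hy
  have hyx := bregmanDiv_nonneg hS hf hmono hy hx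
  rw [← bregmanDiv_add_bregmanDiv f, mul_add]
  gcongr
  exacts [min_le_left s t, min_le_right s t]

end Bregman

section CompositeGradient

variable {E F : Type*} [NormedAddCommGroup E] [InnerProductSpace ℝ E]
  [NormedAddCommGroup F] [InnerProductSpace ℝ F]

/-- The gradient of `d_z (u, w) = d_u u + α ⟪a, u⟫ d_v (⟪a, u⟫⁻¹ • w)`, where `gu`, `gv` are the
gradients of `d_u`, `d_v`. -/
noncomputable def compositeGradient (gu : E → E) (dv : F → ℝ) (gv : F → F) (α : ℝ) (a : E)
    (z : E × F) : E × F :=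
  let y := ⟪a, z.1⟫⁻¹ • z.2
  (gu z.1 + (α * (dv y - ⟪gv y, y⟫)) • a, α • gv y)

theorem inner_compositeGradient_sub (gu : E → E) (dv : F → ℝ) (gv : F → F) (α : ℝ) {a u u' : E}
    (v v' : F) (hu : ⟪a, u⟫ ≠ 0) (hu' : ⟪a, u'⟫ ≠ 0) :
    ⟪(compositeGradient gu dv gv α a (u, ⟪a, u⟫ • v)).1
        - (compositeGradient gu dv gv α a (u', ⟪a, u'⟫ • v')).1, u - u'⟫
      + ⟪(compositeGradient gu dv gv α a (u, ⟪a, u⟫ • v)).2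
        - (compositeGradient gu dv gv α a (u', ⟪a, u'⟫ • v')).2, ⟪a, u⟫ • v - ⟪a, u'⟫ • v'⟫
      = ⟪gu u - gu u', u - u'⟫
        + α * (⟪a, u⟫ * bregmanDiv dv gv v v' + ⟪a, u'⟫ * bregmanDiv dv gv v' v) := by
  simp only [compositeGradient, inv_smul_smul₀ hu, inv_smul_smul₀ hu', bregmanDiv,
    inner_sub_left, inner_sub_right, inner_add_left, inner_smul_left, inner_smul_right,
    RCLike.conj_to_real]
  ring

end CompositeGradient

theorem norm_smul_sub_smul_le {F : Type*} [NormedAddCommGroup F] [NormedSpace ℝ F]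
    {s t R : ℝ} {v v' : F} (hs : 0 ≤ s) (ht : 0 ≤ t) (hv : ‖v‖ ≤ R) (hv' : ‖v'‖ ≤ R) :
    ‖s • v - t • v'‖ ≤ min s t * ‖v - v'‖ + |s - t| * R := by
  wlog hst : s ≤ t generalizing s t v v'
  · have := this ht hs hv' hv (le_of_not_ge hst)
    rwa [norm_sub_rev, min_comm, norm_sub_rev v', abs_sub_comm] at this
  calc ‖s • v - t • v'‖ = ‖s • (v - v') + (s - t) • v'‖ := by congr 1; module
    _ ≤ s * ‖v - v'‖ + |s - t| * ‖v'‖ := by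
      grw [norm_add_le, norm_smul, norm_smul, Real.norm_of_nonneg hs, Real.norm_eq_abs]
    _ ≤ min s t * ‖v - v'‖ + |s - t| * R := by
      rw [min_eq_left hst]; gcongr

theorem norm_inner_smul_sub_inner_smul_le {E F : Type*} [NormedAddCommGroup E]
    [InnerProductSpace ℝ E] [NormedAddCommGroup F] [NormedSpace ℝ F] {a u u' : E} {v v' : F}
    {R : ℝ} (hu : 0 ≤ ⟪a, u⟫) (hu' : 0 ≤ ⟪a, u'⟫) (hv : ‖v‖ ≤ R) (hv' : ‖v'‖ ≤ R) :
    ‖⟪a, u⟫ • v - ⟪a, u'⟫ • v'‖ ≤ min ⟪a, u⟫ ⟪a, u'⟫ * ‖v - v'‖ + ‖a‖ * R * ‖u - u'‖ := by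
  have hR : 0 ≤ R := (norm_nonneg v).trans hv
  calc ‖⟪a, u⟫ • v - ⟪a, u'⟫ • v'‖ ≤ min ⟪a, u⟫ ⟪a, u'⟫ * ‖v - v'‖ + |⟪a, u - u'⟫| * R := by
        rw [inner_sub_right]; exact norm_smul_sub_smul_le hu hu' hv hv'
    _ ≤ min ⟪a, u⟫ ⟪a, u'⟫ * ‖v - v'‖ + ‖a‖ * ‖u - u'‖ * R := by
        grw [abs_real_inner_le_norm]
    _ = min ⟪a, u⟫ ⟪a, u'⟫ * ‖v - v'‖ + ‖a‖ * R * ‖u - u'‖ := by ring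

theorem sq_add_sq_le_of_le_mul_add {x y w M A H : ℝ} (hw : 0 ≤ w) (hwle : w ≤ M * y + A * x)
    (hM : 0 ≤ M) (hMH : M ≤ H) :
    x ^ 2 + w ^ 2 ≤ (1 + 2 * A ^ 2 + 2 * H) * (x ^ 2 + M * y ^ 2) := by
  have hw2 : w ^ 2 ≤ 2 * M ^ 2 * y ^ 2 + 2 * A ^ 2 * x ^ 2 := by
    nlinarith [sq_nonneg (M * y - A * x)]
  nlinarith [mul_le_mul_of_nonneg_right hMH (mul_nonneg hM (sq_nonneg y)), sq_nonneg (A * x),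
    mul_nonneg (mul_nonneg hM (sq_nonneg y)) (sq_nonneg A)]

theorem composite_dgf_strong_convexity_general
    {m n : ℕ}
    (U : Set (EuclideanSpace ℝ (Fin m))) (V : Set (EuclideanSpace ℝ (Fin n)))
    (hUc : IsCompact U)
    (hVc : IsCompact V) (hVconv : Convex ℝ V)
    (a : EuclideanSpace ℝ (Fin m))
    (hhpos : ∀ u ∈ intrinsicInterior ℝ U, 0 < ⟪a, u⟫)
    (αv : ℝ) (hαv : 0 < αv)
    (μu μv : ℝ) (hμu : 0 < μu) (hμv : 0 < μv)
    (gu : EuclideanSpace ℝ (Fin m) → EuclideanSpace ℝ (Fin m))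
    (hmonou : ∀ u ∈ intrinsicInterior ℝ U, ∀ u' ∈ intrinsicInterior ℝ U,
      ⟪gu u - gu u', u - u'⟫ ≥ μu * ‖u - u'‖ ^ 2)
    (dv : EuclideanSpace ℝ (Fin n) → ℝ)
    (gv : EuclideanSpace ℝ (Fin n) → EuclideanSpace ℝ (Fin n))
    (hdv : ∀ y ∈ intrinsicInterior ℝ V, HasGradientAt dv (gv y) y)
    (hmonov : ∀ y ∈ intrinsicInterior ℝ V, ∀ y' ∈ intrinsicInterior ℝ V,
      ⟪gv y - gv y', y - y'⟫ ≥ μv * ‖y - y'‖ ^ 2)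
    (G : EuclideanSpace ℝ (Fin m) × EuclideanSpace ℝ (Fin n)
        → EuclideanSpace ℝ (Fin m) × EuclideanSpace ℝ (Fin n))
    (hG : ∀ z : EuclideanSpace ℝ (Fin m) × EuclideanSpace ℝ (Fin n),
      G z = (gu z.1 + (αv * (dv ((⟪a, z.1⟫)⁻¹ • z.2)
              - ⟪gv ((⟪a, z.1⟫)⁻¹ • z.2), (⟪a, z.1⟫)⁻¹ • z.2⟫)) • a,
            αv • gv ((⟪a, z.1⟫)⁻¹ • z.2))) :
    ∃ μ : ℝ, 0 < μ ∧
      ∀ u ∈ intrinsicInterior ℝ U, ∀ u' ∈ intrinsicInterior ℝ U,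
      ∀ v ∈ intrinsicInterior ℝ V, ∀ v' ∈ intrinsicInterior ℝ V,
        ⟪(G (u, ⟪a, u⟫ • v)).1 - (G (u', ⟪a, u'⟫ • v')).1, u - u'⟫
          + ⟪(G (u, ⟪a, u⟫ • v)).2 - (G (u', ⟪a, u'⟫ • v')).2,
              ⟪a, u⟫ • v - ⟪a, u'⟫ • v'⟫
        ≥ μ * (‖u - u'‖ ^ 2 + ‖⟪a, u⟫ • v - ⟪a, u'⟫ • v'‖ ^ 2) := by
  obtain ⟨Ru, hRu0, hRu⟩ := hUc.isBounded.exists_pos_norm_le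
  obtain ⟨Rv, -, hRv⟩ := hVc.isBounded.exists_pos_norm_le
  obtain rfl : G = compositeGradient gu dv gv αv a := funext hG
  have hgv : ∀ y ∈ intrinsicInterior ℝ V, ∀ y' ∈ intrinsicInterior ℝ V,
      0 ≤ ⟪gv y - gv y', y - y'⟫ := fun y hy y' hy' =>
    (mul_nonneg hμv.le (sq_nonneg _)).trans (hmonov y hy y' hy')
  set c := min μu (αv * μv)
  set K := 1 + 2 * (‖a‖ * Rv) ^ 2 + 2 * (‖a‖ * Ru)
  have hK : 0 < K := by positivity
  refine ⟨c / K, by positivity, fun u hu u' hu' v hv v' hv' => ?_⟩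
  have hs := hhpos u hu
  have ht := hhpos u' hu'
  set M := min ⟪a, u⟫ ⟪a, u'⟫
  have hweighted : M * (μv * ‖v - v'‖ ^ 2)
      ≤ ⟪a, u⟫ * bregmanDiv dv gv v v' + ⟪a, u'⟫ * bregmanDiv dv gv v' v :=
    (mul_le_mul_of_nonneg_left (hmonov v hv v' hv') (le_min hs.le ht.le)).trans
      (min_mul_inner_le_mul_bregmanDiv_add hVconv.intrinsicInterior hdv hgv hv hv' _ _)
  have hM : M ≤ ‖a‖ * Ru := (min_le_left _ _).trans <|
    (real_inner_le_norm a u).trans (by gcongr; exact hRu u (intrinsicInterior_subset hu))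
  have hnorms := sq_add_sq_le_of_le_mul_add (norm_nonneg _)
    (norm_inner_smul_sub_inner_smul_le hs.le ht.le (hRv v (intrinsicInterior_subset hv))
      (hRv v' (intrinsicInterior_subset hv'))) (le_min hs.le ht.le) hM
  rw [inner_compositeGradient_sub gu dv gv αv v v' hs.ne' ht.ne']
  calc c / K * (‖u - u'‖ ^ 2 + ‖⟪a, u⟫ • v - ⟪a, u'⟫ • v'‖ ^ 2)
      ≤ c / K * (K * (‖u - u'‖ ^ 2 + M * ‖v - v'‖ ^ 2)) := by gcongr
    _ = c * ‖u - u'‖ ^ 2 + c * (M * ‖v - v'‖ ^ 2) := by field_simp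
    _ ≤ μu * ‖u - u'‖ ^ 2 + αv * μv * (M * ‖v - v'‖ ^ 2) := by
      gcongr
      exacts [min_le_left _ _, min_le_right _ _]
    _ ≤ _ := by linear_combination hmonou u hu u' hu' + αv * hweighted

/-- **Strong convexity of the composite DGF on a scaled extension** (Proposition 1).
If `d_u` is `μ_u`-strongly convex on `relint U` and `d_v` is `μ_v`-strongly convex on
`relint V` (gradient-monotonicity sense, Euclidean norm), then the composite
`d_z(u,w) = d_u(u) + α_v·h(u)·d_v(w/h(u))` is strongly convex (some modulus `μ > 0`)
on `(relint U) ◁^h (relint V)` with respect to the Euclidean norm. -/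
theorem composite_dgf_strong_convexity
    {m n : ℕ}
    (U : Set (EuclideanSpace ℝ (Fin m))) (V : Set (EuclideanSpace ℝ (Fin n)))
    (hUne : U.Nonempty) (hVne : V.Nonempty)
    (hUc : IsCompact U) (hUconv : Convex ℝ U)
    (hVc : IsCompact V) (hVconv : Convex ℝ V)
    (a : EuclideanSpace ℝ (Fin m))
    (hh0 : ∀ u ∈ U, 0 ≤ ⟪a, u⟫)
    (hhpos : ∀ u ∈ intrinsicInterior ℝ U, 0 < ⟪a, u⟫)
    (αv : ℝ) (hαv : 0 < αv)
    (μu μv : ℝ) (hμu : 0 < μu) (hμv : 0 < μv)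
    (du : EuclideanSpace ℝ (Fin m) → ℝ)
    (gu : EuclideanSpace ℝ (Fin m) → EuclideanSpace ℝ (Fin m))
    (hdu : ∀ u ∈ intrinsicInterior ℝ U, HasGradientAt du (gu u) u)
    (hmonou : ∀ u ∈ intrinsicInterior ℝ U, ∀ u' ∈ intrinsicInterior ℝ U,
      ⟪gu u - gu u', u - u'⟫ ≥ μu * ‖u - u'‖ ^ 2)
    (dv : EuclideanSpace ℝ (Fin n) → ℝ)
    (gv : EuclideanSpace ℝ (Fin n) → EuclideanSpace ℝ (Fin n))
    (hdv : ∀ y ∈ intrinsicInterior ℝ V, HasGradientAt dv (gv y) y)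
    (hmonov : ∀ y ∈ intrinsicInterior ℝ V, ∀ y' ∈ intrinsicInterior ℝ V,
      ⟪gv y - gv y', y - y'⟫ ≥ μv * ‖y - y'‖ ^ 2)
    (G : EuclideanSpace ℝ (Fin m) × EuclideanSpace ℝ (Fin n)
        → EuclideanSpace ℝ (Fin m) × EuclideanSpace ℝ (Fin n))
    (hG : ∀ z : EuclideanSpace ℝ (Fin m) × EuclideanSpace ℝ (Fin n),
      G z = (gu z.1 + (αv * (dv ((⟪a, z.1⟫)⁻¹ • z.2)
              - ⟪gv ((⟪a, z.1⟫)⁻¹ • z.2), (⟪a, z.1⟫)⁻¹ • z.2⟫)) • a,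
            αv • gv ((⟪a, z.1⟫)⁻¹ • z.2))) :
    ∃ μ : ℝ, 0 < μ ∧
      ∀ u ∈ intrinsicInterior ℝ U, ∀ u' ∈ intrinsicInterior ℝ U,
      ∀ v ∈ intrinsicInterior ℝ V, ∀ v' ∈ intrinsicInterior ℝ V,
        ⟪(G (u, ⟪a, u⟫ • v)).1 - (G (u', ⟪a, u'⟫ • v')).1, u - u'⟫
          + ⟪(G (u, ⟪a, u⟫ • v)).2 - (G (u', ⟪a, u'⟫ • v')).2,
              ⟪a, u⟫ • v - ⟪a, u'⟫ • v'⟫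
        ≥ μ * (‖u - u'‖ ^ 2 + ‖⟪a, u⟫ • v - ⟪a, u'⟫ • v'‖ ^ 2) :=
  composite_dgf_strong_convexity_general U V hUc hVc hVconv a hhpos αv hαv μu μv hμu hμv gu hmonou
    dv gv hdv hmonov G hG
end

section
/- Conjugate (smoothed support function) decomposition for scaled extensions. Let U ⊆ ℝ^m and V ⊆ ℝ^n be nonempty compact sets, let h : ℝ^m → ℝ be a linear function h(u) = a·u that is nonnegative on U, let α > 0, and let d_u : ℝ^m → ℝ and d_v : ℝ^n → ℝ be continuous. Then for all g_u ∈ ℝ^m and g_v ∈ ℝ^n: sup_{u∈U, v∈V} [ g_u·u + h(u)·(g_v·v) − d_u(u) − α·h(u)·d_v(v) ] = sup_{u∈U} [ (g_u + α·c·a)·u − d_u(u) ], where c := sup_{v∈V} [ (g_v/α)·v − d_v(v) ]. -/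
open scoped RealInnerProductSpace

/-- **Conjugate (smoothed support function) decomposition for scaled extensions.**
For nonempty compact `U`, `V`, a linear `h(u) = ⟪a, u⟫` nonnegative on `U`, `α > 0` and
continuous `d_u`, `d_v`:
`sup_{u∈U, v∈V} [g_u·u + h(u)(g_v·v) − d_u(u) − α·h(u)·d_v(v)]
  = sup_{u∈U} [(g_u + α·c·a)·u − d_u(u)]` where `c = sup_{v∈V} [(g_v/α)·v − d_v(v)]`. -/
theorem conjugate_decomposition_scaledExtension
    {m n : ℕ}
    (U : Set (EuclideanSpace ℝ (Fin m))) (V : Set (EuclideanSpace ℝ (Fin n)))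
    (hUne : U.Nonempty) (hVne : V.Nonempty)
    (hUc : IsCompact U) (hVc : IsCompact V)
    (a : EuclideanSpace ℝ (Fin m))
    (hh0 : ∀ u ∈ U, 0 ≤ ⟪a, u⟫)
    (α : ℝ) (hα : 0 < α)
    (du : EuclideanSpace ℝ (Fin m) → ℝ) (hdu : Continuous du)
    (dv : EuclideanSpace ℝ (Fin n) → ℝ) (hdv : Continuous dv)
    (gu : EuclideanSpace ℝ (Fin m)) (gv : EuclideanSpace ℝ (Fin n))
    (c : ℝ)
    (hc : c = sSup ((fun v => ⟪α⁻¹ • gv, v⟫ - dv v) '' V)) :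
    sSup {r : ℝ | ∃ u ∈ U, ∃ v ∈ V,
        r = ⟪gu, u⟫ + ⟪a, u⟫ * ⟪gv, v⟫ - du u - α * ⟪a, u⟫ * dv v}
      = sSup ((fun u => ⟪gu + (α * c) • a, u⟫ - du u) '' U) := by

  classical
  have hα' : α ≠ 0 := hα.ne'
  set φ : EuclideanSpace ℝ (Fin n) → ℝ := fun v => ⟪α⁻¹ • gv, v⟫ - dv v with hφdef
  have hφc : Continuous φ := (continuous_const.inner continuous_id).sub hdv
  obtain ⟨v0, hv0V, hv0max⟩ := hVc.exists_isMaxOn hVne hφc.continuousOn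
  have hcval : c = φ v0 := by
    rw [hc]
    exact IsGreatest.csSup_eq ⟨⟨v0, hv0V, rfl⟩, fun r ⟨v, hv, hr⟩ => hr ▸ hv0max hv⟩
  have hφle : ∀ v ∈ V, φ v ≤ c := fun v hv => hcval ▸ hv0max hv
  set g : EuclideanSpace ℝ (Fin m) → ℝ := fun u => ⟪gu + (α * c) • a, u⟫ - du u with hgdef
  have hgc : Continuous g := (continuous_const.inner continuous_id).sub hdu
  have hgexp : ∀ u, g u = ⟪gu, u⟫ + α * c * ⟪a, u⟫ - du u := by
    intro u
    simp [hgdef, inner_add_left, real_inner_smul_left, Finset.mul_sum, mul_assoc]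
  have hφexp : ∀ v, φ v = α⁻¹ * ⟪gv, v⟫ - dv v := by
    intro v
    simp [hφdef, real_inner_smul_left, Finset.mul_sum, mul_assoc]
  -- key identity
  have key : ∀ u, ∀ v,
      ⟪gu, u⟫ + ⟪a, u⟫ * ⟪gv, v⟫ - du u - α * ⟪a, u⟫ * dv v
        = g u + α * ⟪a, u⟫ * (φ v - c) := by
    intro u v
    rw [hgexp, hφexp]
    field_simp
    ring
  have hFle : ∀ u ∈ U, ∀ v ∈ V,
      ⟪gu, u⟫ + ⟪a, u⟫ * ⟪gv, v⟫ - du u - α * ⟪a, u⟫ * dv v ≤ g u := by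
    intro u hu v hv
    rw [key]
    have h1 : α * ⟪a, u⟫ * (φ v - c) ≤ 0 := by
      have := hφle v hv
      have h2 : 0 ≤ α * ⟪a, u⟫ := mul_nonneg hα.le (hh0 u hu)
      nlinarith
    linarith
  have hFeq : ∀ u, ⟪gu, u⟫ + ⟪a, u⟫ * ⟪gv, v0⟫ - du u - α * ⟪a, u⟫ * dv v0 = g u := by
    intro u
    rw [key, ← hcval]
    ring
  have hgbdd : BddAbove (g '' U) := hUc.bddAbove_image hgc.continuousOn
  obtain ⟨u0, hu0⟩ := hUne
  have hSne : {r : ℝ | ∃ u ∈ U, ∃ v ∈ V,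
      r = ⟪gu, u⟫ + ⟪a, u⟫ * ⟪gv, v⟫ - du u - α * ⟪a, u⟫ * dv v}.Nonempty :=
    ⟨_, u0, hu0, v0, hv0V, rfl⟩
  have hSbdd : BddAbove {r : ℝ | ∃ u ∈ U, ∃ v ∈ V,
      r = ⟪gu, u⟫ + ⟪a, u⟫ * ⟪gv, v⟫ - du u - α * ⟪a, u⟫ * dv v} := by
    obtain ⟨M, hM⟩ := hgbdd
    refine ⟨M, ?_⟩
    rintro r ⟨u, hu, v, hv, rfl⟩
    exact le_trans (hFle u hu v hv) (hM ⟨u, hu, rfl⟩)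
  apply le_antisymm
  · refine csSup_le hSne ?_
    rintro r ⟨u, hu, v, hv, rfl⟩
    exact le_trans (hFle u hu v hv) (le_csSup hgbdd ⟨u, hu, rfl⟩)
  · refine csSup_le ⟨g u0, u0, hu0, rfl⟩ ?_
    rintro r ⟨u, hu, rfl⟩
    exact le_csSup hSbdd ⟨u, hu, v0, hv0V, (hFeq u).symm⟩
end

section
/- Proposition (gradient-monotonicity lower bound for composite dilated DGFs on chains of scaled extensions). Under the chain-of-scaled-extensions setup, for all x = (x_1,…,x_n) and x′ = (x′_1,…,x′_n) in (relint X_1) ◁^{h_1} ⋯ ◁^{h_{n−1}} (relint X_n), the composite DGF d satisfies ⟨∇d(x) − ∇d(x′), x − x′⟩ ≥ Σ_{k=1}^n Σ_{i=1}^{s_k} ( α_k/2 − Σ_{p=k}^{n−1} α_{p+1}·‖a_p‖₀·a_{p,k}[i] ) · (x_k[i] − x′_k[i])². -/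
/-!
Write `y_k = x_k / H_k(x)`. The `k`-th block of the gradient of the composite DGF is `α_k` times
the gradient of the perspective `(x_k, h) ↦ h d_k(x_k / h)`, plus the terms coming from later
blocks through the linear scalings `H_p`. Pairing with `x − x'`, each block contributes at least
`α_k (‖x_k − x'_k‖² / 2 − (H_k(x) − H_k(x'))²)`: this follows from the first-order strong
convexity inequality for `d_k` (integrate the monotone gradient along a segment of
`relint X_k`) together with `‖y_k‖ ≤ 1` and `H_k ≤ 1`. The loss `(H_k(x) − H_k(x'))²` is the
square of a linear form whose coefficients lie in `[0, 1]`, so Cauchy–Schwarz over the support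
of `a_k` bounds it by `‖a_k‖₀ ∑ a_{k,q}[i] (x_q[i] − x'_q[i])²`; exchanging the order of
summation gives the stated coefficients.
-/

open Finset
open scoped RealInnerProductSpace

theorem intrinsicInterior_mono_of_affineSpan_eq {𝕜 V P : Type*} [Ring 𝕜] [AddCommGroup V]
    [Module 𝕜 V] [TopologicalSpace P] [AddTorsor V P] {s t : Set P} (hts : t ⊆ s)
    (hspan : affineSpan 𝕜 t = affineSpan 𝕜 s) :
    intrinsicInterior 𝕜 t ⊆ intrinsicInterior 𝕜 s := by
  unfold intrinsicInterior
  rw [hspan]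
  exact Set.image_mono (interior_mono (Set.preimage_mono hts))

section NormedSpace

variable {E : Type*} [NormedAddCommGroup E] [NormedSpace ℝ E]

theorem Convex.lineMap_mem_intrinsicInterior {s : Set E} (hs : Convex ℝ s) {x y : E}
    (hx : x ∈ intrinsicInterior ℝ s) (hy : y ∈ s) {t : ℝ} (ht₀ : 0 ≤ t) (ht₁ : t < 1) :
    AffineMap.lineMap x y t ∈ intrinsicInterior ℝ s := by
  have hr : 1 - t ≠ 0 := by linarith
  -- The homothety centred at `y` with ratio `1 - t` maps `s` into itself and preserves its
  -- affine span, hence maps `intrinsicInterior ℝ s` into itself.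
  let φ : E ≃ᴬ[ℝ] E :=
    { toAffineEquiv := AffineEquiv.homothetyUnitsMulHom y (Units.mk0 (1 - t) hr)
      continuous_toFun := AffineMap.homothety_continuous y _
      continuous_invFun := AffineMap.homothety_continuous y _ }
  have hφ : ∀ z, φ z = AffineMap.lineMap y z (1 - t) := fun z => AffineMap.homothety_eq_lineMap ..
  have hφs : φ '' s ⊆ s := by
    rintro _ ⟨z, hz, rfl⟩
    rw [hφ]
    exact hs.lineMap_mem hy hz ⟨by linarith, by linarith⟩
  have hspan : affineSpan ℝ (φ '' s) = affineSpan ℝ s := by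
    refine le_antisymm (affineSpan_mono ℝ hφs) (affineSpan_le.2 fun z hz => ?_)
    have hy' : y ∈ affineSpan ℝ (φ '' s) := subset_affineSpan ℝ _ ⟨y, hy, by simp [hφ]⟩
    have hz' : φ z ∈ affineSpan ℝ (φ '' s) := subset_affineSpan ℝ _ ⟨z, hz, rfl⟩
    rw [← φ.symm_apply_apply z]
    exact AffineMap.homothety_mem hy' (1 - t)⁻¹ hz'
  have := intrinsicInterior_mono_of_affineSpan_eq hφs hspan
    (φ.intrinsicInterior_image s ▸ Set.mem_image_of_mem φ hx)
  rwa [hφ, AffineMap.lineMap_apply_one_sub] at this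

theorem norm_smul_sub_smul_sq_le {h h' : ℝ} (hh₀ : 0 ≤ h) (hh'₀ : 0 ≤ h') (hsum : h + h' ≤ 2)
    {y y' : E} (hy : ‖y‖ ≤ 1) (hy' : ‖y'‖ ≤ 1) :
    ‖h • y - h' • y'‖ ^ 2 ≤ (h + h') * ‖y - y'‖ ^ 2 + 2 * (h - h') ^ 2 := by
  have hsplit : h • y - h' • y' = ((h + h') / 2) • (y - y') + ((h - h') / 2) • (y + y') := by
    module
  have hle : ‖h • y - h' • y'‖ ≤ (h + h') / 2 * ‖y - y'‖ + |h - h'| := by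
    rw [hsplit]
    refine (norm_add_le _ _).trans (add_le_add ?_ ?_)
    · rw [norm_smul, Real.norm_of_nonneg (by positivity)]
    · rw [norm_smul, Real.norm_eq_abs, abs_div, abs_two]
      have := (norm_add_le y y').trans (add_le_add hy hy')
      nlinarith [abs_nonneg (h - h')]
  have hm : ((h + h') / 2) ^ 2 ≤ (h + h') / 2 := by nlinarith
  nlinarith [pow_le_pow_left₀ (norm_nonneg _) hle 2, sq_abs (h - h'),
    sq_nonneg ((h + h') / 2 * ‖y - y'‖ - |h - h'|), sq_nonneg ‖y - y'‖]

end NormedSpace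

section InnerProductSpace

variable {E : Type*} [NormedAddCommGroup E] [InnerProductSpace ℝ E] [CompleteSpace E]

theorem Convex.add_inner_add_half_sq_le {s : Set E} (hs : Convex ℝ s) {d : E → ℝ} {g : E → E}
    (hdg : ∀ z ∈ intrinsicInterior ℝ s, HasGradientAt d (g z) z)
    (hmono : ∀ z ∈ intrinsicInterior ℝ s, ∀ z' ∈ intrinsicInterior ℝ s,
      ‖z - z'‖ ^ 2 ≤ ⟪g z - g z', z - z'⟫)
    {y y' : E} (hy : y ∈ intrinsicInterior ℝ s) (hy' : y' ∈ intrinsicInterior ℝ s) :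
    d y + ⟪g y, y' - y⟫ + ‖y' - y‖ ^ 2 / 2 ≤ d y' := by
  set u := y' - y
  have hseg : ∀ t ∈ Set.Icc (0 : ℝ) 1, t • u + y ∈ intrinsicInterior ℝ s := by
    rintro t ⟨ht₀, ht₁⟩
    rw [← AffineMap.lineMap_apply_module']
    rcases ht₁.lt_or_eq with ht₁ | rfl
    · exact hs.lineMap_mem_intrinsicInterior hy (intrinsicInterior_subset hy') ht₀ ht₁
    · simpa using hy'
  have hderiv : ∀ t ∈ Set.Icc (0 : ℝ) 1, HasDerivAt
      (fun t => d (t • u + y) - t * ⟪g y, u⟫ - t ^ 2 / 2 * ‖u‖ ^ 2)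
      (⟪g (t • u + y), u⟫ - ⟪g y, u⟫ - t * ‖u‖ ^ 2) t := by
    intro t ht
    have hline : HasDerivAt (fun t : ℝ => t • u + y) u t := by
      simpa using ((hasDerivAt_id t).smul_const u).add_const y
    have hd := ((hdg _ (hseg t ht)).hasFDerivAt.comp_hasDerivAt t hline)
    simp only [Function.comp_def, InnerProductSpace.toDual_apply_apply] at hd
    have hq : HasDerivAt (fun t : ℝ => t ^ 2 / 2 * ‖u‖ ^ 2) (t * ‖u‖ ^ 2) t :=
      ((hasDerivAt_pow 2 t).div_const 2).mul_const _ |>.congr_deriv (by norm_num)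
    exact (hd.sub ((hasDerivAt_id t).mul_const _)).sub hq |>.congr_deriv (by simp)
  have hmon := monotoneOn_of_hasDerivWithinAt_nonneg (convex_Icc (0 : ℝ) 1)
    (fun t ht => (hderiv t ht).continuousAt.continuousWithinAt)
    (fun t ht => (hderiv t (interior_subset ht)).hasDerivWithinAt) (fun t ht => by
      rw [interior_Icc] at ht
      have hm := hmono _ (hseg t (Set.Ioo_subset_Icc_self ht)) y hy
      rw [add_sub_cancel_right, norm_smul, inner_smul_right, inner_sub_left, mul_pow,
        Real.norm_of_nonneg ht.1.le] at hm
      nlinarith [ht.1])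
  have h01 := hmon (by norm_num : (0 : ℝ) ∈ Set.Icc 0 1) (by norm_num : (1 : ℝ) ∈ Set.Icc 0 1)
    zero_le_one
  have hy'u : u + y = y' := sub_add_cancel y' y
  norm_num [hy'u] at h01
  linarith

/-- `(g y, d y - ⟪g y, y⟫)` is the gradient of the perspective `(z, h) ↦ h d (z / h)` at
`(h • y, h)`. -/
theorem perspective_inner_gradient_sub_ge {s : Set E} (hs : Convex ℝ s)
    (hbd : ∀ v ∈ s, ‖v‖ ≤ 1) {d : E → ℝ} {g : E → E}
    (hdg : ∀ z ∈ intrinsicInterior ℝ s, HasGradientAt d (g z) z)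
    (hmono : ∀ z ∈ intrinsicInterior ℝ s, ∀ z' ∈ intrinsicInterior ℝ s,
      ‖z - z'‖ ^ 2 ≤ ⟪g z - g z', z - z'⟫)
    {y y' : E} (hy : y ∈ intrinsicInterior ℝ s) (hy' : y' ∈ intrinsicInterior ℝ s)
    {h h' : ℝ} (hh₀ : 0 ≤ h) (hh₁ : h ≤ 1) (hh'₀ : 0 ≤ h') (hh'₁ : h' ≤ 1) :
    ‖h • y - h' • y'‖ ^ 2 / 2 - (h - h') ^ 2 ≤
      ⟪g y - g y', h • y - h' • y'⟫ + (d y - ⟪g y, y⟫ - (d y' - ⟪g y', y'⟫)) * (h - h') := by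
  have hB := hs.add_inner_add_half_sq_le hdg hmono hy' hy
  have hB' := hs.add_inner_add_half_sq_le hdg hmono hy hy'
  rw [norm_sub_rev y' y] at hB'
  have hid : ⟪g y - g y', h • y - h' • y'⟫ + (d y - ⟪g y, y⟫ - (d y' - ⟪g y', y'⟫)) * (h - h')
      = h * (d y - d y' - ⟪g y', y - y'⟫) + h' * (d y' - d y - ⟪g y, y' - y⟫) := by
    simp only [inner_sub_left, inner_sub_right, real_inner_smul_right]
    ring
  have hnorm := norm_smul_sub_smul_sq_le hh₀ hh'₀ (by linarith)
    (hbd y (intrinsicInterior_subset hy)) (hbd y' (intrinsicInterior_subset hy'))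
  rw [hid]
  nlinarith [mul_le_mul_of_nonneg_left hB hh₀, mul_le_mul_of_nonneg_left hB' hh'₀]

end InnerProductSpace

theorem sq_sum_inner_le_card_support_mul_sum {ι : Type*} {m : ι → ℕ} (Q : Finset ι)
    (v w : ∀ q, EuclideanSpace ℝ (Fin (m q))) (hv : ∀ q ∈ Q, ∀ i, v q i ∈ Set.Icc (0 : ℝ) 1) :
    (∑ q ∈ Q, ⟪v q, w q⟫) ^ 2
      ≤ ((∑ q ∈ Q, (univ.filter (fun i => v q i ≠ 0)).card : ℕ) : ℝ)
        * ∑ q ∈ Q, ∑ i, v q i * w q i ^ 2 := by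
  set I := Q.sigma fun q => univ.filter (fun i => v q i ≠ 0)
  have hsum : ∑ q ∈ Q, ⟪v q, w q⟫ = ∑ j ∈ I, v j.1 j.2 * w j.1 j.2 := by
    rw [sum_sigma]
    refine sum_congr rfl fun q _ => ?_
    rw [sum_filter_of_ne fun i _ hi => left_ne_zero_of_mul hi]
    simp [PiLp.inner_apply, mul_comm]
  have hsq : ∑ j ∈ I, (v j.1 j.2 * w j.1 j.2) ^ 2 ≤ ∑ q ∈ Q, ∑ i, v q i * w q i ^ 2 := by
    rw [sum_sigma]
    refine sum_le_sum fun q hq => (sum_le_sum_of_subset_of_nonneg (filter_subset _ _)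
      fun i _ _ => mul_nonneg (hv q hq i).1 (sq_nonneg _)).trans' (sum_le_sum fun i _ => ?_)
    have ⟨h₀, h₁⟩ := hv q hq i
    nlinarith [mul_nonneg (mul_nonneg h₀ (sub_nonneg.2 h₁)) (sq_nonneg (w q i))]
  rw [hsum, ← card_sigma]
  exact sq_sum_le_card_mul_sum_sq.trans (mul_le_mul_of_nonneg_left hsq (Nat.cast_nonneg _))

section Chain

variable {ι : Type*} [Fintype ι] [LinearOrder ι]

theorem sum_sum_filter_lt_comm {M : Type*} [AddCommMonoid M] (f : ι → ι → M) :
    ∑ k, ∑ p ∈ univ.filter (fun p => k < p), f k p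
      = ∑ p, ∑ k ∈ univ.filter (fun k => k < p), f k p := by
  simp_rw [sum_filter]
  exact sum_comm

theorem sum_inner_add_sum_filter_gt_smul {F : ι → Type*} [∀ k, NormedAddCommGroup (F k)]
    [∀ k, InnerProductSpace ℝ (F k)] (u w : ∀ k, F k) (c : ι → ℝ) (a : ι → ∀ q, F q) :
    ∑ k, ⟪u k + ∑ p ∈ univ.filter (fun p => k < p), c p • a p k, w k⟫
      = ∑ k, (⟪u k, w k⟫ + c k * ∑ q ∈ univ.filter (fun q => q < k), ⟪a k q, w q⟫) := by
  simp only [inner_add_left, sum_inner, real_inner_smul_left, sum_add_distrib, mul_sum]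
  rw [sum_sum_filter_lt_comm (fun k p => c p * ⟪a p k, w k⟫)]

theorem sum_sum_sub_sum_mul_sq_eq {m : ι → ℕ} (α N : ι → ℝ)
    (a : ι → ∀ q, EuclideanSpace ℝ (Fin (m q))) (x x' : ∀ q, EuclideanSpace ℝ (Fin (m q))) :
    ∑ k, ∑ i, (α k / 2 - ∑ p ∈ univ.filter (fun p => k < p), α p * N p * a p k i)
        * (x k i - x' k i) ^ 2
      = ∑ k, (α k * (‖x k - x' k‖ ^ 2 / 2)
        - α k * (N k * ∑ q ∈ univ.filter (fun q => q < k),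
          ∑ i, a k q i * (x q i - x' q i) ^ 2)) := by
  simp only [EuclideanSpace.norm_sq_eq, PiLp.sub_apply, Real.norm_eq_abs, sq_abs, sub_mul,
    sum_sub_distrib, sum_mul, mul_sum]
  congr 1
  · refine sum_congr rfl fun k _ => ?_
    rw [sum_div, mul_sum]
    exact sum_congr rfl fun i _ => by ring
  · rw [← sum_sum_filter_lt_comm]
    refine sum_congr rfl fun k _ => sum_comm.trans ?_
    exact sum_congr rfl fun p _ => sum_congr rfl fun i _ => by ring

theorem sum_inner_chain_gradient_sub_ge {m : ι → ℕ} (α : ι → ℝ) (hα : ∀ k, 0 ≤ α k)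
    (a : ι → ∀ q, EuclideanSpace ℝ (Fin (m q)))
    (ha : ∀ k q, q < k → ∀ i, a k q i ∈ Set.Icc (0 : ℝ) 1)
    (u u' x x' : ∀ q, EuclideanSpace ℝ (Fin (m q))) (e e' : ι → ℝ)
    (hblock : ∀ k, ‖x k - x' k‖ ^ 2 / 2
        - (∑ q ∈ univ.filter (fun q => q < k), ⟪a k q, x q - x' q⟫) ^ 2
      ≤ ⟪u k - u' k, x k - x' k⟫
        + (e k - e' k) * ∑ q ∈ univ.filter (fun q => q < k), ⟪a k q, x q - x' q⟫) :
    ∑ k, ∑ i, (α k / 2 - ∑ p ∈ univ.filter (fun p => k < p),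
          α p * ((∑ q ∈ univ.filter (fun q => q < p),
            (univ.filter (fun i => a p q i ≠ 0)).card : ℕ) : ℝ) * a p k i)
        * (x k i - x' k i) ^ 2
      ≤ ∑ k, ⟪(α k • u k + ∑ p ∈ univ.filter (fun p => k < p), (α p * e p) • a p k)
          - (α k • u' k + ∑ p ∈ univ.filter (fun p => k < p), (α p * e' p) • a p k),
          x k - x' k⟫ := by
  have hsub : ∀ k, (α k • u k + ∑ p ∈ univ.filter (fun p => k < p), (α p * e p) • a p k)
      - (α k • u' k + ∑ p ∈ univ.filter (fun p => k < p), (α p * e' p) • a p k)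
      = α k • (u k - u' k) + ∑ p ∈ univ.filter (fun p => k < p), (α p * (e p - e' p)) • a p k := by
    intro k
    simp only [smul_sub, mul_sub, sub_smul, sum_sub_distrib]
    abel
  simp only [hsub, sum_inner_add_sum_filter_gt_smul, real_inner_smul_left]
  rw [sum_sum_sub_sum_mul_sq_eq]
  refine sum_le_sum fun k _ => ?_
  have hCS := sq_sum_inner_le_card_support_mul_sum (univ.filter (fun q => q < k)) (a k)
    (fun q => x q - x' q) fun q hq => ha k q (mem_filter.1 hq).2
  simp only [PiLp.sub_apply] at hCS
  nlinarith [mul_le_mul_of_nonneg_left (hblock k) (hα k), mul_le_mul_of_nonneg_left hCS (hα k)]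

end Chain

theorem chain_composite_dgf_gradient_monotonicity_bound_general
    {n : ℕ}
    (s : Fin n → ℕ)
    (X : (k : Fin n) → Set (EuclideanSpace ℝ (Fin (s k))))
    (hXconv : ∀ k, Convex ℝ (X k)) (hXbd : ∀ k, ∀ v ∈ X k, ‖v‖ ≤ 1)
    (a : (k : Fin n) → (q : Fin n) → EuclideanSpace ℝ (Fin (s q)))
    (ha : ∀ k q, q < k → ∀ i, a k q i ∈ Set.Icc (0 : ℝ) 1)
    (H : Fin n → ((k : Fin n) → EuclideanSpace ℝ (Fin (s k))) → ℝ)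
    (hHdef : ∀ k x, H k x = ∑ q ∈ Finset.univ.filter (fun q => q < k), ⟪a k q, x q⟫)
    (memX memRelX : ((k : Fin n) → EuclideanSpace ℝ (Fin (s k))) → Prop)
    (hmemX : ∀ x, memX x ↔ ∀ k : Fin n,
        (k.val = 0 → x k ∈ X k) ∧ (k.val ≠ 0 → ∃ v ∈ X k, x k = H k x • v))
    (hmemRelX : ∀ x, memRelX x ↔ ∀ k : Fin n,
        (k.val = 0 → x k ∈ intrinsicInterior ℝ (X k)) ∧
        (k.val ≠ 0 → ∃ v ∈ intrinsicInterior ℝ (X k), x k = H k x • v))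
    (hH01 : ∀ x, memX x → ∀ k : Fin n, k.val ≠ 0 → 0 ≤ H k x ∧ H k x ≤ 1)
    (hHpos : ∀ x, memRelX x → ∀ k : Fin n, k.val ≠ 0 → 0 < H k x)
    (d : (k : Fin n) → EuclideanSpace ℝ (Fin (s k)) → ℝ)
    (g : (k : Fin n) → EuclideanSpace ℝ (Fin (s k)) → EuclideanSpace ℝ (Fin (s k)))
    (hdg : ∀ k, ∀ y ∈ intrinsicInterior ℝ (X k), HasGradientAt (d k) (g k y) y)
    (hmono : ∀ k, ∀ y ∈ intrinsicInterior ℝ (X k), ∀ y' ∈ intrinsicInterior ℝ (X k),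
        ⟪g k y - g k y', y - y'⟫ ≥ ‖y - y'‖ ^ 2)
    (α : Fin n → ℝ) (hα : ∀ k, 0 < α k)
    (y : ((k : Fin n) → EuclideanSpace ℝ (Fin (s k))) → (k : Fin n) → EuclideanSpace ℝ (Fin (s k)))
    (hy : ∀ x k, y x k = if k.val = 0 then x k else (H k x)⁻¹ • x k)
    (G : ((k : Fin n) → EuclideanSpace ℝ (Fin (s k))) → (k : Fin n) → EuclideanSpace ℝ (Fin (s k)))
    (hG : ∀ x k, G x k = α k • g k (y x k)
        + ∑ p ∈ Finset.univ.filter (fun p => k < p),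
            (α p * (d p (y x p) - ⟪g p (y x p), y x p⟫)) • a p k) :
    ∀ x x', memRelX x → memRelX x' →
      ∑ k, ⟪G x k - G x' k, x k - x' k⟫
      ≥ ∑ k, ∑ i, (α k / 2 - ∑ p ∈ Finset.univ.filter (fun p => k < p),
            α p * ((∑ q ∈ Finset.univ.filter (fun q => q < p),
                (Finset.univ.filter (fun i : Fin (s q) => a p q i ≠ 0)).card : ℕ) : ℝ)
              * a p k i)
          * (x k i - x' k i) ^ 2 := by
  intro x x' hx hx'
  have hcomp : ∀ z, memRelX z → ∀ k : Fin n, y z k ∈ intrinsicInterior ℝ (X k) ∧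
      (k.val = 0 → y z k = z k) ∧ (k.val ≠ 0 → 0 < H k z ∧ H k z ≤ 1 ∧ z k = H k z • y z k) := by
    intro z hz k
    have hzk := (hmemRelX z).1 hz
    have hzX : memX z := (hmemX z).2 fun k => ⟨fun h0 => intrinsicInterior_subset ((hzk k).1 h0),
      fun h0 => (hzk k).2 h0 |>.imp fun v hv => ⟨intrinsicInterior_subset hv.1, hv.2⟩⟩
    by_cases h0 : k.val = 0
    · simp [hy, h0, (hzk k).1 h0]
    · obtain ⟨v, hv, hzv⟩ := (hzk k).2 h0
      have hpos := hHpos z hz k h0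
      rw [hy, if_neg h0, hzv, smul_smul, inv_mul_cancel₀ hpos.ne', one_smul]
      exact ⟨hv, fun h => absurd h h0, fun _ => ⟨hpos, (hH01 z hzX k h0).2, rfl⟩⟩
  simp only [hG, ge_iff_le]
  refine sum_inner_chain_gradient_sub_ge α (fun k => (hα k).le) a ha _ _ x x' _ _ fun k => ?_
  have hΔH : ∑ q ∈ univ.filter (fun q => q < k), ⟪a k q, x q - x' q⟫ = H k x - H k x' := by
    simp only [hHdef, inner_sub_right, sum_sub_distrib]
  rw [hΔH]
  obtain ⟨hyx, hx0, hx1⟩ := hcomp x hx k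
  obtain ⟨hyx', hx0', hx1'⟩ := hcomp x' hx' k
  by_cases h0 : k.val = 0
  · have hH : ∀ z, H k z = 0 := fun z => by simp [hHdef, Fin.lt_def, h0]
    rw [hH, hH, ← hx0 h0, ← hx0' h0]
    nlinarith [hmono k _ hyx _ hyx', sq_nonneg ‖y x k - y x' k‖]
  · obtain ⟨hpos, hle, hxk⟩ := hx1 h0
    obtain ⟨hpos', hle', hx'k⟩ := hx1' h0
    rw [hxk, hx'k]
    exact perspective_inner_gradient_sub_ge (hXconv k) (hXbd k) (hdg k) (hmono k) hyx hyx'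
      hpos.le hle hpos'.le hle'

/-- **Gradient-monotonicity lower bound for composite dilated DGFs on chains of scaled
extensions** (Proposition 2). Under the chain-of-scaled-extensions setup, for all `x, x'` in
`(relint X_1) ◁^{h_1} ⋯ ◁^{h_{n−1}} (relint X_n)`:
`⟨∇d(x) − ∇d(x'), x − x'⟩ ≥ ∑_k ∑_i (α_k/2 − ∑_{p>k} α_p·‖a_p‖₀·a_{p,k}[i])·(x_k[i] − x'_k[i])²`.
Here component `k ≥ 1` of the chain is scaled by the linear map `H k` with coefficient
blocks `a k q` (`q < k`), and `G` is the gradient of the composite DGF `d`. -/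
theorem chain_composite_dgf_gradient_monotonicity_bound
    {n : ℕ} (hn : 0 < n)
    (s : Fin n → ℕ) (hs : ∀ k, 0 < s k)
    (X : (k : Fin n) → Set (EuclideanSpace ℝ (Fin (s k))))
    (hXne : ∀ k, (X k).Nonempty) (hXcpt : ∀ k, IsCompact (X k))
    (hXconv : ∀ k, Convex ℝ (X k)) (hXbd : ∀ k, ∀ v ∈ X k, ‖v‖ ≤ 1)
    (a : (k : Fin n) → (q : Fin n) → EuclideanSpace ℝ (Fin (s q)))
    (ha : ∀ k q, q < k → ∀ i, a k q i ∈ Set.Icc (0 : ℝ) 1)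
    (H : Fin n → ((k : Fin n) → EuclideanSpace ℝ (Fin (s k))) → ℝ)
    (hHdef : ∀ k x, H k x = ∑ q ∈ Finset.univ.filter (fun q => q < k), ⟪a k q, x q⟫)
    (memX memRelX : ((k : Fin n) → EuclideanSpace ℝ (Fin (s k))) → Prop)
    (hmemX : ∀ x, memX x ↔ ∀ k : Fin n,
        (k.val = 0 → x k ∈ X k) ∧ (k.val ≠ 0 → ∃ v ∈ X k, x k = H k x • v))
    (hmemRelX : ∀ x, memRelX x ↔ ∀ k : Fin n,
        (k.val = 0 → x k ∈ intrinsicInterior ℝ (X k)) ∧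
        (k.val ≠ 0 → ∃ v ∈ intrinsicInterior ℝ (X k), x k = H k x • v))
    (hH01 : ∀ x, memX x → ∀ k : Fin n, k.val ≠ 0 → 0 ≤ H k x ∧ H k x ≤ 1)
    (hHpos : ∀ x, memRelX x → ∀ k : Fin n, k.val ≠ 0 → 0 < H k x)
    (d : (k : Fin n) → EuclideanSpace ℝ (Fin (s k)) → ℝ)
    (g : (k : Fin n) → EuclideanSpace ℝ (Fin (s k)) → EuclideanSpace ℝ (Fin (s k)))
    (hdc : ∀ k, ContinuousOn (d k) (X k))
    (hdg : ∀ k, ∀ y ∈ intrinsicInterior ℝ (X k), HasGradientAt (d k) (g k y) y)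
    (hmono : ∀ k, ∀ y ∈ intrinsicInterior ℝ (X k), ∀ y' ∈ intrinsicInterior ℝ (X k),
        ⟪g k y - g k y', y - y'⟫ ≥ ‖y - y'‖ ^ 2)
    (α : Fin n → ℝ) (hα : ∀ k, 0 < α k)
    (y : ((k : Fin n) → EuclideanSpace ℝ (Fin (s k))) → (k : Fin n) → EuclideanSpace ℝ (Fin (s k)))
    (hy : ∀ x k, y x k = if k.val = 0 then x k else (H k x)⁻¹ • x k)
    (G : ((k : Fin n) → EuclideanSpace ℝ (Fin (s k))) → (k : Fin n) → EuclideanSpace ℝ (Fin (s k)))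
    (hG : ∀ x k, G x k = α k • g k (y x k)
        + ∑ p ∈ Finset.univ.filter (fun p => k < p),
            (α p * (d p (y x p) - ⟪g p (y x p), y x p⟫)) • a p k) :
    ∀ x x', memRelX x → memRelX x' →
      ∑ k, ⟪G x k - G x' k, x k - x' k⟫
      ≥ ∑ k, ∑ i, (α k / 2 - ∑ p ∈ Finset.univ.filter (fun p => k < p),
            α p * ((∑ q ∈ Finset.univ.filter (fun q => q < p),
                (Finset.univ.filter (fun i : Fin (s q) => a p q i ≠ 0)).card : ℕ) : ℝ)
              * a p k i)
          * (x k i - x' k i) ^ 2 :=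
  chain_composite_dgf_gradient_monotonicity_bound_general s X hXconv hXbd a ha H hHdef memX memRelX
    hmemX hmemRelX hH01 hHpos d g hdg hmono α hα y hy G hG
end

section
/- Hessian lower bound for the dilated entropy on chains of scaled extensions of simplexes. In the simplex chain-of-scaled-extensions setup, for arbitrary positive coefficients α_1,…,α_n, for every x = (x_1,…,x_n) ∈ (relint Δ^{s_1}) ◁^{h_1} ⋯ ◁^{h_{n−1}} (relint Δ^{s_n}) and every m = (m_1,…,m_n) ∈ ℝ^{s_1}×⋯×ℝ^{s_n}: m^⊤ ∇²ψ(x) m ≥ Σ_{k=1}^n Σ_{i=1}^{s_k} ( α_k/2 − Σ_{p=k}^{n−1} α_{p+1}·‖a_p‖₀·a_{p,k}[i] ) · m_k[i]² / x_k[i]. -/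
/-!
On the relative interior all coordinates are positive, so `ψ` is smooth there and its Hessian
splits into blocks. Writing `P_k = ∑ᵢ m_k[i]²/x_k[i]`, `M = ∑ᵢ m_k[i]`, `w = h_{k-1}(m)` and
`h = h_{k-1}(x) = ∑ᵢ x_k[i]`, block `k` contributes `α_k (P_k − 2Mw/h + w²/h)`.
Cauchy–Schwarz gives `M² ≤ h P_k` and `w² ≤ h N_k` with
`N_k = ∑_{q<k} ∑ᵢ a_{k,q}[i] m_q[i]²/x_q[i]`, and together with `2Mw ≤ M²/2 + 2w²` this
bounds block `k` below by `α_k (P_k/2 − N_k)`. Exchanging the order of summation in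
`∑_k α_k N_k` and using `a_{p,k}[i] ≤ ‖a_p‖₀ a_{p,k}[i]` yields the bound.
-/

open Finset Filter Topology

section HessianForm

variable {E : Type*} [NormedAddCommGroup E] [NormedSpace ℝ E] {f g : E → ℝ} {Q R : E → ℝ}
  {x : E}

def HasHessianFormAt (f : E → ℝ) (Q : E → ℝ) (x : E) : Prop :=
  ∃ f' : E → E →L[ℝ] ℝ, (∀ᶠ y in 𝓝 x, HasFDerivAt f (f' y) y) ∧
    ∃ B : E →L[ℝ] E →L[ℝ] ℝ, HasFDerivAt f' B x ∧ ∀ m, B m m = Q m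

namespace HasHessianFormAt

theorem iteratedFDeriv_two_apply (h : HasHessianFormAt f Q x) (m : E) :
    iteratedFDeriv ℝ 2 f x ![m, m] = Q m := by
  obtain ⟨f', hf', B, hB, hBQ⟩ := h
  have hderiv : fderiv ℝ f =ᶠ[𝓝 x] f' := hf'.mono fun y hy => hy.fderiv
  simp [_root_.iteratedFDeriv_two_apply, hderiv.fderiv_eq, hB.fderiv, hBQ]

theorem congr_of_eventuallyEq (h : HasHessianFormAt g Q x) (hfg : f =ᶠ[𝓝 x] g) :
    HasHessianFormAt f Q x := by
  obtain ⟨g', hg', B, hB, hBQ⟩ := h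
  refine ⟨g', ?_, B, hB, hBQ⟩
  filter_upwards [hfg.eventuallyEq_nhds, hg'] with y hy hgy using hgy.congr_of_eventuallyEq hy

theorem congr_form (h : HasHessianFormAt f Q x) (hQR : ∀ m, Q m = R m) :
    HasHessianFormAt f R x := by
  obtain ⟨f', hf', B, hB, hBQ⟩ := h
  exact ⟨f', hf', B, hB, fun m => (hBQ m).trans (hQR m)⟩

theorem add (hf : HasHessianFormAt f Q x) (hg : HasHessianFormAt g R x) :
    HasHessianFormAt (fun y => f y + g y) (fun m => Q m + R m) x := by
  obtain ⟨f', hf', B, hB, hBQ⟩ := hf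
  obtain ⟨g', hg', C, hC, hCR⟩ := hg
  refine ⟨fun y => f' y + g' y, ?_, B + C, hB.add hC, by simp [hBQ, hCR]⟩
  filter_upwards [hf', hg'] with y h1 h2 using h1.add h2

theorem sub (hf : HasHessianFormAt f Q x) (hg : HasHessianFormAt g R x) :
    HasHessianFormAt (fun y => f y - g y) (fun m => Q m - R m) x := by
  obtain ⟨f', hf', B, hB, hBQ⟩ := hf
  obtain ⟨g', hg', C, hC, hCR⟩ := hg
  refine ⟨fun y => f' y - g' y, ?_, B - C, hB.sub hC, by simp [hBQ, hCR]⟩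
  filter_upwards [hf', hg'] with y h1 h2 using h1.sub h2

theorem const_mul (hf : HasHessianFormAt f Q x) (c : ℝ) :
    HasHessianFormAt (fun y => c * f y) (fun m => c * Q m) x := by
  obtain ⟨f', hf', B, hB, hBQ⟩ := hf
  refine ⟨fun y => c • f' y, ?_, c • B, hB.const_smul c, by simp [hBQ]⟩
  filter_upwards [hf'] with y h1 using h1.const_mul c

end HasHessianFormAt

theorem hasHessianFormAt_const (c : ℝ) (x : E) : HasHessianFormAt (fun _ => c) (fun _ => 0) x :=
  ⟨0, .of_forall fun y => hasFDerivAt_const c y, 0, hasFDerivAt_const 0 x, by simp⟩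

theorem ContinuousLinearMap.hasHessianFormAt (u : E →L[ℝ] ℝ) (x : E) :
    HasHessianFormAt u (fun _ => 0) x :=
  ⟨fun _ => u, .of_forall fun y => u.hasFDerivAt, 0, hasFDerivAt_const u x, by simp⟩

theorem hasHessianFormAt_sum {ι : Type*} (t : Finset ι) {f : ι → E → ℝ} {Q : ι → E → ℝ}
    (h : ∀ j ∈ t, HasHessianFormAt (f j) (Q j) x) :
    HasHessianFormAt (fun y => ∑ j ∈ t, f j y) (fun m => ∑ j ∈ t, Q j m) x := by
  classical
  induction t using Finset.induction with
  | empty => simpa using hasHessianFormAt_const 0 x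
  | insert j t hj ih =>
    simp only [Finset.sum_insert hj]
    exact (h j (mem_insert_self j t)).add (ih fun i hi => h i (mem_insert_of_mem hi))

theorem hasHessianFormAt_mul_log (u v : E →L[ℝ] ℝ) (hv : 0 < v x) :
    HasHessianFormAt (fun y => u y * Real.log (v y))
      (fun m => 2 * u m * v m / v x - u x * v m ^ 2 / v x ^ 2) x := by
  have hlog : ∀ y, 0 < v y → HasFDerivAt (fun z => Real.log (v z)) ((v y)⁻¹ • v) y :=
    fun y hy => (Real.hasDerivAt_log hy.ne').comp_hasFDerivAt y v.hasFDerivAt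
  have hinv : HasFDerivAt (fun y => u y * (v y)⁻¹) (u x • (-(v x ^ 2)⁻¹ • v) + (v x)⁻¹ • u) x :=
    u.hasFDerivAt.mul ((hasDerivAt_inv hv.ne').comp_hasFDerivAt x v.hasFDerivAt)
  refine ⟨fun y => Real.log (v y) • u + (u y * (v y)⁻¹) • v, ?_, _,
    ((hlog x hv).smul (hasFDerivAt_const u x)).add (hinv.smul (hasFDerivAt_const v x)), ?_⟩
  · filter_upwards [v.continuous.continuousAt.eventually (lt_mem_nhds hv)] with y hy
    refine (u.hasFDerivAt.mul (hlog y hy)).congr_fderiv ?_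
    ext z
    simp only [add_apply, smul_apply, smul_eq_mul]
    ring
  · intro m
    simp only [add_apply, smul_apply, zero_apply, ContinuousLinearMap.smulRight_apply, smul_eq_mul]
    field_simp
    ring

theorem hasHessianFormAt_mul_log_self (u : E →L[ℝ] ℝ) (hu : 0 < u x) :
    HasHessianFormAt (fun y => u y * Real.log (u y)) (fun m => u m ^ 2 / u x) x :=
  (hasHessianFormAt_mul_log u u hu).congr_form fun m => by field_simp; ring

end HessianForm

theorem eventually_add_smul_mem_of_mem_intrinsicInterior {E : Type*} [NormedAddCommGroup E]
    [NormedSpace ℝ E] {S : Set E} {v w : E} (hv : v ∈ intrinsicInterior ℝ S)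
    (hw : w ∈ (affineSpan ℝ S).direction) : ∀ᶠ t in 𝓝 (0 : ℝ), v + t • w ∈ S := by
  obtain ⟨y, hy, rfl⟩ := mem_intrinsicInterior.1 hv
  let γ : ℝ → affineSpan ℝ S := fun t =>
    ⟨t • w +ᵥ (y : E), AffineSubspace.vadd_mem_of_mem_direction
      (Submodule.smul_mem _ t hw) y.2⟩
  have hγ : Continuous γ := by fun_prop
  have hγ0 : γ 0 = y := by ext; simp [γ]
  filter_upwards [hγ.continuousAt.preimage_mem_nhds (hγ0 ▸ isOpen_interior.mem_nhds hy)]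
    with t ht
  simpa [γ, add_comm] using interior_subset ht

theorem pos_of_mem_intrinsicInterior_stdSimplex {ι : Type*} [Fintype ι] {v : ι → ℝ}
    (hv : v ∈ intrinsicInterior ℝ (stdSimplex ℝ ι)) (i : ι) : 0 < v i := by
  classical
  have hvS := intrinsicInterior_subset hv
  refine (hvS.1 i).lt_of_ne fun hvi => ?_
  have hdir : v - Pi.single i 1 ∈ (affineSpan ℝ (stdSimplex ℝ ι)).direction :=
    AffineSubspace.vsub_mem_direction (subset_affineSpan ℝ _ hvS)
      (subset_affineSpan ℝ _ (single_mem_stdSimplex ℝ i))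
  -- pushing `v` away from the vertex `i` stays in the simplex only if `v i > 0`
  obtain ⟨t, htS, ht⟩ : ∃ t : ℝ, v + t • (v - Pi.single i 1) ∈ stdSimplex ℝ ι ∧ 0 < t :=
    (((eventually_add_smul_mem_of_mem_intrinsicInterior hv hdir).filter_mono
      nhdsWithin_le_nhds).and (self_mem_nhdsWithin (s := Set.Ioi 0))).exists
  have := htS.1 i
  simp [← hvi] at this
  linarith

theorem pos_and_sum_eq_of_eq_smul_mem_intrinsicInterior {ι : Type*} [Fintype ι] {y v : ι → ℝ}
    {h : ℝ} (hh : 0 < h) (hv : v ∈ intrinsicInterior ℝ (stdSimplex ℝ ι)) (hy : y = h • v) :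
    (∀ i, 0 < y i) ∧ ∑ i, y i = h := by
  subst hy
  refine ⟨fun i => mul_pos hh (pos_of_mem_intrinsicInterior_stdSimplex hv i), ?_⟩
  simp [← mul_sum, (intrinsicInterior_subset hv).2]

theorem sq_sum_mul_le_sum_mul_mul_sum_mul_sq_div {ι : Type*} (t : Finset ι) {c x : ι → ℝ}
    (m : ι → ℝ) (hc : ∀ i ∈ t, 0 ≤ c i) (hx : ∀ i ∈ t, 0 < x i) :
    (∑ i ∈ t, c i * m i) ^ 2 ≤ (∑ i ∈ t, c i * x i) * ∑ i ∈ t, c i * m i ^ 2 / x i :=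
  sum_sq_le_sum_mul_sum_of_sq_le_mul t (fun i hi => mul_nonneg (hc i hi) (hx i hi).le)
    (fun i hi => div_nonneg (mul_nonneg (hc i hi) (sq_nonneg _)) (hx i hi).le)
    fun i hi => le_of_eq (by field_simp [(hx i hi).ne'])

theorem half_sub_le_hessian_block {P N M w h : ℝ} (hh : 0 < h) (hM : M ^ 2 ≤ h * P)
    (hw : w ^ 2 ≤ h * N) : P / 2 - N ≤ P - (2 * M * w / h - h * w ^ 2 / h ^ 2) := by
  have key : P - (2 * M * w / h - h * w ^ 2 / h ^ 2) - (P / 2 - N)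
      = (h * P / 2 - 2 * M * w + w ^ 2 + h * N) / h := by
    field_simp
    ring
  -- `2 M w ≤ M² / 2 + 2 w²`
  have hnum : 0 ≤ h * P / 2 - 2 * M * w + w ^ 2 + h * N := by
    nlinarith [sq_nonneg (M - 2 * w)]
  linarith [key ▸ div_nonneg hnum hh.le]

section SimplexChain

variable {n : ℕ} {s : Fin n → ℕ}

-- `ℝ^{s_1} × ⋯ × ℝ^{s_n}`, with blocks indexed from `0`
variable (s) in
abbrev BlockVec := (k : Fin n) → Fin (s k) → ℝ

def coord (k : Fin n) (i : Fin (s k)) : BlockVec s →L[ℝ] ℝ :=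
  (ContinuousLinearMap.proj i).comp
    (ContinuousLinearMap.proj (R := ℝ) (φ := fun k => Fin (s k) → ℝ) k)

@[simp] theorem coord_apply (k : Fin n) (i : Fin (s k)) (y : BlockVec s) :
    coord k i y = y k i := rfl

variable (a : (k : Fin n) → (q : Fin n) → Fin (s q) → ℝ)

-- the paper's `h_k`, which scales block `k` (so `chainForm a 0 = 0`)
def chainForm (k : Fin n) : BlockVec s →L[ℝ] ℝ :=
  ∑ q ∈ univ.filter (· < k), ∑ i, a k q i • coord q i

theorem chainForm_apply (k : Fin n) (y : BlockVec s) :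
    chainForm a k y = ∑ q ∈ univ.filter (· < k), ∑ i, a k q i * y q i := by
  simp [chainForm]

-- the paper's `‖a_p‖₀`
noncomputable def supportCard (p : Fin n) : ℕ :=
  ∑ q ∈ univ.filter (· < p), #(univ.filter fun i : Fin (s q) => a p q i ≠ 0)

variable {a}

theorem le_supportCard_mul {p q : Fin n} (hqp : q < p) {i : Fin (s q)} (ha : 0 ≤ a p q i) :
    a p q i ≤ supportCard a p * a p q i := by
  rcases ha.eq_or_lt with h0 | hpos
  · simp [← h0]
  refine le_mul_of_one_le_left ha ?_
  have hi : i ∈ univ.filter fun j : Fin (s q) => a p q j ≠ 0 := by simp [hpos.ne']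
  have hq : q ∈ univ.filter (· < p) := by simp [hqp]
  exact_mod_cast (card_pos.2 ⟨i, hi⟩).trans_le
    (single_le_sum (f := fun q => #(univ.filter fun j : Fin (s q) => a p q j ≠ 0))
      (fun _ _ => Nat.zero_le _) hq)

theorem sq_chainForm_le {x : BlockVec s} (hx : ∀ q i, 0 < x q i)
    {k : Fin n} (ha : ∀ q < k, ∀ i, 0 ≤ a k q i) (m : BlockVec s) :
    chainForm a k m ^ 2 ≤
      chainForm a k x * ∑ q ∈ univ.filter (· < k), ∑ i, a k q i * m q i ^ 2 / x q i := by
  simp only [chainForm_apply, sum_sigma']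
  exact sq_sum_mul_le_sum_mul_mul_sum_mul_sq_div _ _
    (fun p hp => ha p.1 (by simpa using (mem_sigma.1 hp).1) p.2) fun p _ => hx p.1 p.2

theorem sum_mul_sum_chain_le_sum_supportCard {α : Fin n → ℝ} (hα : ∀ k, 0 ≤ α k)
    (ha : ∀ k q, q < k → ∀ i, 0 ≤ a k q i) {x : BlockVec s} (hx : ∀ k i, 0 < x k i)
    (m : BlockVec s) :
    ∑ k, α k * ∑ q ∈ univ.filter (· < k), ∑ i, a k q i * m q i ^ 2 / x q i ≤
      ∑ k, ∑ i, (∑ p ∈ univ.filter (k < ·), α p * supportCard a p * a p k i) *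
        m k i ^ 2 / x k i := by
  calc ∑ k, α k * ∑ q ∈ univ.filter (· < k), ∑ i, a k q i * m q i ^ 2 / x q i
      = ∑ k, ∑ q ∈ univ.filter (· < k), ∑ i, α k * (a k q i * m q i ^ 2 / x q i) := by
        simp only [mul_sum]
    _ ≤ ∑ k, ∑ q ∈ univ.filter (· < k), ∑ i,
          α k * supportCard a k * a k q i * m q i ^ 2 / x q i := by
        refine sum_le_sum fun k _ => sum_le_sum fun q hq => sum_le_sum fun i _ => ?_
        have hqk : q < k := (mem_filter.1 hq).2
        have hterm : 0 ≤ m q i ^ 2 / x q i := div_nonneg (sq_nonneg _) (hx q i).le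
        calc α k * (a k q i * m q i ^ 2 / x q i) = α k * a k q i * (m q i ^ 2 / x q i) := by ring
          _ ≤ α k * (supportCard a k * a k q i) * (m q i ^ 2 / x q i) := by
            gcongr
            · exact hα k
            · exact le_supportCard_mul hqk (ha k q hqk i)
          _ = α k * supportCard a k * a k q i * m q i ^ 2 / x q i := by ring
    _ = ∑ q, ∑ k ∈ univ.filter (q < ·), ∑ i, α k * supportCard a k * a k q i * m q i ^ 2 / x q i :=
        sum_comm' fun k q => by simp
    _ = _ := by
        refine sum_congr rfl fun q _ => ?_
        rw [sum_comm]
        simp only [sum_mul, sum_div]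

noncomputable def dilatedEntropy (hn : 0 < n) (α : Fin n → ℝ) (H : Fin n → BlockVec s → ℝ)
    (y : BlockVec s) : ℝ :=
  α ⟨0, hn⟩ * (Real.log ((s ⟨0, hn⟩ : ℝ)) + ∑ i, y ⟨0, hn⟩ i * Real.log (y ⟨0, hn⟩ i))
    + ∑ k ∈ univ.filter (fun k : Fin n => k.val ≠ 0),
        α k * (H k y * Real.log ((s k : ℝ)) + ∑ i, y k i * Real.log (y k i / H k y))

variable (a) in
noncomputable def dilatedEntropyHessian (hn : 0 < n) (α : Fin n → ℝ) (x m : BlockVec s) : ℝ :=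
  α ⟨0, hn⟩ * ∑ i, m ⟨0, hn⟩ i ^ 2 / x ⟨0, hn⟩ i
    + ∑ k ∈ univ.filter (fun k : Fin n => k.val ≠ 0), α k * (∑ i, m k i ^ 2 / x k i
        - (2 * (∑ i, m k i) * chainForm a k m / chainForm a k x
          - (∑ i, x k i) * chainForm a k m ^ 2 / chainForm a k x ^ 2))

theorem hasHessianFormAt_dilatedEntropy (hn : 0 < n) (α : Fin n → ℝ) {x : BlockVec s}
    (hx : ∀ k i, 0 < x k i) (hV : ∀ k : Fin n, k.val ≠ 0 → 0 < chainForm a k x) :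
    HasHessianFormAt (dilatedEntropy hn α fun k => chainForm a k)
      (dilatedEntropyHessian a hn α x) x := by
  have hent (k : Fin n) (i : Fin (s k)) : HasHessianFormAt
      (fun y : BlockVec s => y k i * Real.log (y k i)) (fun m => m k i ^ 2 / x k i) x :=
    hasHessianFormAt_mul_log_self (coord k i) (hx k i)
  have hfirst := ((hasHessianFormAt_const (Real.log (s ⟨0, hn⟩)) x).add
    (hasHessianFormAt_sum univ fun i _ => hent ⟨0, hn⟩ i)).const_mul (α ⟨0, hn⟩)
  have hblock : ∀ k ∈ univ.filter (fun k : Fin n => k.val ≠ 0), HasHessianFormAt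
      (fun y => α k * (Real.log (s k) * chainForm a k y + (∑ i, y k i * Real.log (y k i)
        - (∑ i, coord k i) y * Real.log (chainForm a k y)))) _ x := fun k hk =>
    ((((chainForm a k).hasHessianFormAt x).const_mul _).add
      ((hasHessianFormAt_sum univ fun i _ => hent k i).sub
        (hasHessianFormAt_mul_log _ _ (hV k (mem_filter.1 hk).2)))).const_mul (α k)
  refine ((hfirst.add (hasHessianFormAt_sum _ hblock)).congr_form fun m => ?_)
    |>.congr_of_eventuallyEq ?_
  · simp [dilatedEntropyHessian]
  have hpos : ∀ᶠ y in 𝓝 x, ∀ k i, 0 < y k i := by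
    simp only [eventually_all]
    exact fun k i => (coord k i).continuous.continuousAt.eventually (lt_mem_nhds (hx k i))
  have hVpos : ∀ᶠ y in 𝓝 x, ∀ k ∈ univ.filter (fun k : Fin n => k.val ≠ 0),
      0 < chainForm a k y := (eventually_all_finset _).2 fun k hk =>
    (chainForm a k).continuous.continuousAt.eventually (lt_mem_nhds (hV k (mem_filter.1 hk).2))
  filter_upwards [hpos, hVpos] with y hy hVy
  simp only [dilatedEntropy]
  congr 1
  refine sum_congr rfl fun k hk => ?_
  have hlog (i : Fin (s k)) := Real.log_div (hy k i).ne' (hVy k hk).ne'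
  simp only [hlog, mul_sub, sum_sub_distrib, FunLike.coe_sum, Finset.sum_apply,
    coord_apply, sum_mul]
  ring

theorem sum_half_sub_le_dilatedEntropyHessian (hn : 0 < n) {α : Fin n → ℝ}
    (hα : ∀ k, 0 ≤ α k) (ha : ∀ k q, q < k → ∀ i, 0 ≤ a k q i) {x : BlockVec s}
    (hx : ∀ k i, 0 < x k i) (hV : ∀ k : Fin n, k.val ≠ 0 → 0 < chainForm a k x)
    (hsum : ∀ k : Fin n, k.val ≠ 0 → ∑ i, x k i = chainForm a k x) (m : BlockVec s) :
    ∑ k, α k * ((∑ i, m k i ^ 2 / x k i) / 2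
        - ∑ q ∈ univ.filter (· < k), ∑ i, a k q i * m q i ^ 2 / x q i)
      ≤ dilatedEntropyHessian a hn α x m := by
  have hP (k : Fin n) : 0 ≤ ∑ i, m k i ^ 2 / x k i :=
    sum_nonneg fun i _ => div_nonneg (sq_nonneg _) (hx k i).le
  have hN (k : Fin n) : 0 ≤ ∑ q ∈ univ.filter (· < k), ∑ i, a k q i * m q i ^ 2 / x q i :=
    sum_nonneg fun q hq => sum_nonneg fun i _ =>
      div_nonneg (mul_nonneg (ha k q (mem_filter.1 hq).2 i) (sq_nonneg _)) (hx q i).le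
  have herase : univ.filter (fun k : Fin n => k.val ≠ 0) = univ.erase ⟨0, hn⟩ := by
    ext k
    simp [Fin.ext_iff]
  rw [dilatedEntropyHessian, herase, ← add_sum_erase univ _ (mem_univ ⟨0, hn⟩)]
  refine add_le_add (mul_le_mul_of_nonneg_left ?_ (hα _))
    (sum_le_sum fun k hk => mul_le_mul_of_nonneg_left ?_ (hα k))
  · linarith [hP ⟨0, hn⟩, hN ⟨0, hn⟩]
  · have hk0 : k.val ≠ 0 := fun h => (mem_erase.1 hk).1 (Fin.ext h)
    have hMP := sq_sum_mul_le_sum_mul_mul_sum_mul_sq_div univ (c := fun _ => 1) (m k)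
      (fun _ _ => zero_le_one) fun i _ => hx k i
    simp only [one_mul, hsum k hk0] at hMP
    rw [hsum k hk0]
    exact half_sub_le_hessian_block (hV k hk0) hMP (sq_chainForm_le hx (ha k) (m := m))

theorem sum_sub_supportCard_le_sum_half_sub {α : Fin n → ℝ} (hα : ∀ k, 0 ≤ α k)
    (ha : ∀ k q, q < k → ∀ i, 0 ≤ a k q i) {x : BlockVec s} (hx : ∀ k i, 0 < x k i)
    (m : BlockVec s) :
    ∑ k, ∑ i, (α k / 2 - ∑ p ∈ univ.filter (k < ·), α p * supportCard a p * a p k i) *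
        m k i ^ 2 / x k i
      ≤ ∑ k, α k * ((∑ i, m k i ^ 2 / x k i) / 2
        - ∑ q ∈ univ.filter (· < k), ∑ i, a k q i * m q i ^ 2 / x q i) := by
  calc _ = ∑ k, α k / 2 * ∑ i, m k i ^ 2 / x k i - ∑ k, ∑ i,
          (∑ p ∈ univ.filter (k < ·), α p * supportCard a p * a p k i) * m k i ^ 2 / x k i := by
        simp only [sub_mul, sub_div, sum_sub_distrib, mul_sum, mul_div_assoc]
    _ ≤ ∑ k, α k / 2 * ∑ i, m k i ^ 2 / x k i
          - ∑ k, α k * ∑ q ∈ univ.filter (· < k), ∑ i, a k q i * m q i ^ 2 / x q i :=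
        sub_le_sub_left (sum_mul_sum_chain_le_sum_supportCard hα ha hx m) _
    _ = _ := by
        simp only [mul_sub, sum_sub_distrib]
        ring_nf

end SimplexChain

theorem simplex_chain_dilated_entropy_hessian_bound_general
    {n : ℕ} (hn : 0 < n)
    (s : Fin n → ℕ)
    (a : (k : Fin n) → (q : Fin n) → Fin (s q) → ℝ)
    (ha : ∀ k q, q < k → ∀ i, a k q i ∈ Set.Icc (0 : ℝ) 1)
    (H : Fin n → ((k : Fin n) → Fin (s k) → ℝ) → ℝ)
    (hHdef : ∀ k x, H k x = ∑ q ∈ Finset.univ.filter (fun q => q < k), ∑ i, a k q i * x q i)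
    (memRelX : ((k : Fin n) → Fin (s k) → ℝ) → Prop)
    (hmemRelX : ∀ x, memRelX x ↔ ∀ k : Fin n,
        (k.val = 0 → x k ∈ intrinsicInterior ℝ (stdSimplex ℝ (Fin (s k)))) ∧
        (k.val ≠ 0 → ∃ v ∈ intrinsicInterior ℝ (stdSimplex ℝ (Fin (s k))), x k = H k x • v))
    (hHpos : ∀ x, memRelX x → ∀ k : Fin n, k.val ≠ 0 → 0 < H k x)
    (α : Fin n → ℝ) (hα : ∀ k, 0 < α k)
    (ψ : ((k : Fin n) → Fin (s k) → ℝ) → ℝ)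
    (hψ : ψ = fun x =>
      α ⟨0, hn⟩ * (Real.log ((s ⟨0, hn⟩ : ℝ)) + ∑ i, x ⟨0, hn⟩ i * Real.log (x ⟨0, hn⟩ i))
      + ∑ k ∈ Finset.univ.filter (fun k : Fin n => k.val ≠ 0),
          α k * (H k x * Real.log ((s k : ℝ))
            + ∑ i, x k i * Real.log (x k i / H k x))) :
    ∀ x, memRelX x → ∀ m : (k : Fin n) → Fin (s k) → ℝ,
      iteratedFDeriv ℝ 2 ψ x ![m, m]
      ≥ ∑ k, ∑ i, (α k / 2 - ∑ p ∈ Finset.univ.filter (fun p => k < p),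
            α p * ((∑ q ∈ Finset.univ.filter (fun q => q < p),
                (Finset.univ.filter (fun i : Fin (s q) => a p q i ≠ 0)).card : ℕ) : ℝ)
              * a p k i)
          * (m k i) ^ 2 / x k i := by
  intro x hx m
  obtain rfl : H = fun k => ⇑(chainForm a k) :=
    funext₂ fun k y => (hHdef k y).trans (chainForm_apply a k y).symm
  have hV (k : Fin n) (hk : k.val ≠ 0) : 0 < chainForm a k x := hHpos x hx k hk
  have hblock (k : Fin n) : (∀ i, 0 < x k i) ∧ (k.val ≠ 0 → ∑ i, x k i = chainForm a k x) := by
    by_cases hk : k.val = 0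
    · exact ⟨pos_of_mem_intrinsicInterior_stdSimplex (((hmemRelX x).1 hx k).1 hk),
        absurd hk⟩
    · obtain ⟨v, hv, hxk⟩ := ((hmemRelX x).1 hx k).2 hk
      obtain ⟨hpos, hsum⟩ := pos_and_sum_eq_of_eq_smul_mem_intrinsicInterior (hV k hk) hv hxk
      exact ⟨hpos, fun _ => hsum⟩
  have hxpos (k : Fin n) (i : Fin (s k)) : 0 < x k i := (hblock k).1 i
  have ha0 (k q : Fin n) (hqk : q < k) (i : Fin (s q)) : 0 ≤ a k q i := (ha k q hqk i).1
  have hα0 (k : Fin n) : 0 ≤ α k := (hα k).le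
  subst hψ
  change iteratedFDeriv ℝ 2 (dilatedEntropy hn α fun k => chainForm a k) x ![m, m] ≥ _
  rw [ge_iff_le, (hasHessianFormAt_dilatedEntropy hn α hxpos hV).iteratedFDeriv_two_apply m]
  exact (sum_sub_supportCard_le_sum_half_sub hα0 ha0 hxpos m).trans
    (sum_half_sub_le_dilatedEntropyHessian hn hα0 ha0 hxpos hV (fun k => (hblock k).2) m)

/-- **Hessian lower bound for the dilated entropy on chains of scaled extensions of
simplexes.** For arbitrary positive coefficients, at every point of
`(relint Δ^{s_1}) ◁^{h_1} ⋯ ◁^{h_{n−1}} (relint Δ^{s_n})` and every direction `m`: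
`m^⊤ ∇²ψ(x) m ≥ ∑_k ∑_i (α_k/2 − ∑_{p>k} α_p·‖a_p‖₀·a_{p,k}[i]) · m_k[i]² / x_k[i]`. -/
theorem simplex_chain_dilated_entropy_hessian_bound
    {n : ℕ} (hn : 0 < n)
    (s : Fin n → ℕ) (hs : ∀ k, 0 < s k)
    (a : (k : Fin n) → (q : Fin n) → Fin (s q) → ℝ)
    (ha : ∀ k q, q < k → ∀ i, a k q i ∈ Set.Icc (0 : ℝ) 1)
    (H : Fin n → ((k : Fin n) → Fin (s k) → ℝ) → ℝ)
    (hHdef : ∀ k x, H k x = ∑ q ∈ Finset.univ.filter (fun q => q < k), ∑ i, a k q i * x q i)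
    (memX memRelX : ((k : Fin n) → Fin (s k) → ℝ) → Prop)
    (hmemX : ∀ x, memX x ↔ ∀ k : Fin n,
        (k.val = 0 → x k ∈ stdSimplex ℝ (Fin (s k))) ∧
        (k.val ≠ 0 → ∃ v ∈ stdSimplex ℝ (Fin (s k)), x k = H k x • v))
    (hmemRelX : ∀ x, memRelX x ↔ ∀ k : Fin n,
        (k.val = 0 → x k ∈ intrinsicInterior ℝ (stdSimplex ℝ (Fin (s k)))) ∧
        (k.val ≠ 0 → ∃ v ∈ intrinsicInterior ℝ (stdSimplex ℝ (Fin (s k))), x k = H k x • v))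
    (hH01 : ∀ x, memX x → ∀ k : Fin n, k.val ≠ 0 → 0 ≤ H k x ∧ H k x ≤ 1)
    (hHpos : ∀ x, memRelX x → ∀ k : Fin n, k.val ≠ 0 → 0 < H k x)
    (α : Fin n → ℝ) (hα : ∀ k, 0 < α k)
    (ψ : ((k : Fin n) → Fin (s k) → ℝ) → ℝ)
    (hψ : ψ = fun x =>
      α ⟨0, hn⟩ * (Real.log ((s ⟨0, hn⟩ : ℝ)) + ∑ i, x ⟨0, hn⟩ i * Real.log (x ⟨0, hn⟩ i))
      + ∑ k ∈ Finset.univ.filter (fun k : Fin n => k.val ≠ 0),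
          α k * (H k x * Real.log ((s k : ℝ))
            + ∑ i, x k i * Real.log (x k i / H k x))) :
    ∀ x, memRelX x → ∀ m : (k : Fin n) → Fin (s k) → ℝ,
      iteratedFDeriv ℝ 2 ψ x ![m, m]
      ≥ ∑ k, ∑ i, (α k / 2 - ∑ p ∈ Finset.univ.filter (fun p => k < p),
            α p * ((∑ q ∈ Finset.univ.filter (fun q => q < p),
                (Finset.univ.filter (fun i : Fin (s q) => a p q i ≠ 0)).card : ℕ) : ℝ)
              * a p k i)
          * (m k i) ^ 2 / x k i :=
  simplex_chain_dilated_entropy_hessian_bound_general hn s a ha H hHdef memRelX hmemRelX hHpos α hα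
    ψ hψ
end
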